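/- arXiv:2511.22508 — 7 statements merged into one kernel-verified Lean document; each statement's English description precedes it below -/
import Mathlib

section
/- Let T be a finite tree and let A be an alignment of T. Then there exists a planar straight-line drawing f of T such that two incident edges are aligned in f if and only if they form a pair of A. -/
open Classical

noncomputable section

/-- The plane. -/
abbrev Point : Type := ℝ × ℝ

/-- A straight-line drawing `f` of a simple graph `G` is *proper* if it is injective,
the segments of any two distinct edges sharing a vertex `v` intersect exactly in `f v`,
and no vertex other than the endpoints lies on the segment of an edge. -/
def IsProperDrawing {V : Type*} (G : SimpleGraph V) (f : V → Point) : Prop :=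
  Function.Injective f ∧
  (∀ u v w : V, G.Adj u v → G.Adj v w → u ≠ w →
    segment ℝ (f u) (f v) ∩ segment ℝ (f v) (f w) = {f v}) ∧
  (∀ u v x : V, G.Adj u v → x ≠ u → x ≠ v → f x ∉ segment ℝ (f u) (f v))

/-- A *planar* straight-line drawing: proper, and segments of edges with no
common endpoint are disjoint. -/
def IsPlanarDrawing {V : Type*} (G : SimpleGraph V) (f : V → Point) : Prop :=
  IsProperDrawing G f ∧
  ∀ u v w x : V, G.Adj u v → G.Adj w x → u ≠ w → u ≠ x → v ≠ w → v ≠ x →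
    segment ℝ (f u) (f v) ∩ segment ℝ (f w) (f x) = ∅

/-- Number of bends of a path (given by its list of vertices) in the drawing `f`:
a bend at each internal vertex `b` (consecutive triple `a, b, c`) such that
`f b` is not strictly between `f a` and `f c`. -/
def numBends {V : Type*} (f : V → Point) : List V → ℕ
  | a :: b :: c :: rest =>
    (if f b ∈ openSegment ℝ (f a) (f c) then 0 else 1) + numBends f (b :: c :: rest)
  | _ => 0

/-- The edges of a path given by its list of vertices. -/
def edgesOfList {V : Type*} : List V → List (Sym2 V)
  | a :: b :: rest => s(a, b) :: edgesOfList (b :: rest)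
  | _ => []

/-- A list of vertices represents a simple path of `G`. -/
def IsPathList {V : Type*} (G : SimpleGraph V) (l : List V) : Prop :=
  l.Chain' G.Adj ∧ l.Nodup

/-- A path-based support: a set of simple paths of `G` covering all edges of `G`. -/
def IsPathBasedSupport {V : Type*} (G : SimpleGraph V) (P : Finset (List V)) : Prop :=
  (∀ l ∈ P, IsPathList G l) ∧ ∀ e ∈ G.edgeSet, ∃ l ∈ P, e ∈ edgesOfList l

/-- A path-based support is *linear* if two distinct paths share at most one vertex. -/
def IsLinear {V : Type*} (P : Finset (List V)) : Prop :=
  ∀ l₁ ∈ P, ∀ l₂ ∈ P, l₁ ≠ l₂ →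
    ∀ u v : V, u ∈ l₁ → u ∈ l₂ → v ∈ l₁ → v ∈ l₂ → u = v

/-- An *alignment* of `G`: a symmetric relation pairing distinct incident edges of `G`,
such that at every vertex each incident edge is paired with at most one
other edge incident to that vertex. -/
structure IsAlignment {V : Type*} (G : SimpleGraph V) (A : Sym2 V → Sym2 V → Prop) : Prop where
  symm : ∀ e e', A e e' → A e' e
  mem_edges : ∀ e e', A e e' → e ∈ G.edgeSet ∧ e' ∈ G.edgeSet
  ne : ∀ e e', A e e' → e ≠ e'
  share : ∀ e e', A e e' → ∃ v : V, v ∈ e ∧ v ∈ e'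
  uniq : ∀ (v : V) (e e₁ e₂ : Sym2 V), v ∈ e → v ∈ e₁ → v ∈ e₂ →
    A e e₁ → A e e₂ → e₁ = e₂

/-- Number of bends of a path with respect to an alignment `A`:
a bend at each internal vertex whose two incident path edges are not paired in `A`. -/
def numBendsA {V : Type*} (A : Sym2 V → Sym2 V → Prop) : List V → ℕ
  | a :: b :: c :: rest =>
    (if A s(a, b) s(b, c) then 0 else 1) + numBendsA A (b :: c :: rest)
  | _ => 0

/-- A cactus: a connected graph in which every edge lies on at most one cycle,
i.e. two cycles sharing an edge have the same edge set. -/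
def IsCactus {V : Type*} (G : SimpleGraph V) : Prop :=
  G.Connected ∧ ∀ (v w : V) (c : G.Walk v v) (c' : G.Walk w w),
    c.IsCycle → c'.IsCycle → (∃ e, e ∈ c.edges ∧ e ∈ c'.edges) →
    ∀ e, e ∈ c.edges ↔ e ∈ c'.edges

end

open SimpleGraph in
lemma exists_leaf' {V : Type*} [Fintype V] (G : SimpleGraph V) (hG : G.IsAcyclic)
    (he : G.edgeSet.Nonempty) : ∃ u v : V, G.Adj u v ∧ ∀ w, G.Adj u w → w = v := by
  classical
  -- set of lengths of paths
  let S : Set ℕ := {n | ∃ (a b : V) (p : G.Walk a b), p.IsPath ∧ p.length = n}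
  obtain ⟨e, he⟩ := he
  induction e with
  | _ a b =>
    have hab : G.Adj a b := he
    have hS : S.Nonempty := ⟨1, a, b, Walk.cons hab Walk.nil, by
      simp [Walk.isPath_def, hab.ne], by simp⟩
    have hbdd : BddAbove S := by
      refine ⟨Fintype.card V, fun n hn => ?_⟩
      obtain ⟨x, y, p, hp, rfl⟩ := hn
      exact le_of_lt hp.length_lt
    obtain ⟨x, y, p, hp, hlen⟩ := Nat.sSup_mem hS hbdd
    have hmax : ∀ (c d : V) (q : G.Walk c d), q.IsPath → q.length ≤ p.length := by
      intro c d q hq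
      rw [hlen]; exact le_csSup hbdd ⟨c, d, q, hq, rfl⟩
    have hpos : 0 < p.length := by
      rw [hlen]; exact le_csSup hbdd ⟨a, b, Walk.cons hab Walk.nil, by
        simp [Walk.isPath_def, hab.ne], by simp⟩
    -- p is a maximal path; its first vertex is a leaf
    cases p with
    | nil => simp at hpos
    | cons h₀ r =>
      rename_i v'
      refine ⟨x, v', h₀, fun w hw => ?_⟩
      by_contra hne
      by_cases hmem : w ∈ (Walk.cons h₀ r).support
      · -- build a cycle
        set p' : G.Walk x y := Walk.cons h₀ r with hp'
        have hq := hp.takeUntil hmem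
        set q : G.Walk x w := p'.takeUntil w hmem with hqdef
        have hspec0 := p'.take_spec hmem
        rw [← hqdef] at hspec0
        clear_value q
        have hcyc : (Walk.cons hw.symm q).IsCycle := by
          rw [Walk.cons_isCycle_iff]
          refine ⟨hq, fun hedge => ?_⟩
          -- s(w, x) ∈ q.edges
          cases q with
          | nil => exact (hw.ne rfl).elim
          | cons h₁ q₁ =>
            rename_i z
            simp only [Walk.edges_cons, List.mem_cons] at hedge
            rcases hedge with hedge | hedge
            · -- s(w,x) = s(x,z), so w = z, and z = v' since takeUntil is a prefix
              have hwz : w = z := by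
                rw [Sym2.eq_iff] at hedge
                rcases hedge with ⟨h1, h2⟩ | ⟨h1, h2⟩
                · exact absurd h1.symm hw.ne
                · exact h1
              -- second vertex of q equals second vertex of p'
              have : (Walk.cons h₁ q₁).getVert 1 = p'.getVert 1 := by
                rw [← hspec0]
                rcases q₁ with _ | _
                · simp [Walk.getVert_cons_succ, Walk.getVert_zero]
                · simp [Walk.getVert_cons_succ, Walk.getVert_zero]
              have h2 : z = v' := by
                simpa [Walk.getVert_cons_succ, Walk.getVert_zero, hp'] using this
              exact hne (hwz.trans h2)
            · have : x ∈ q₁.support := Walk.snd_mem_support_of_mem_edges _ hedge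
              have hnodup := hq.support_nodup
              simp only [Walk.support_cons, List.nodup_cons] at hnodup
              exact hnodup.1 this
        exact hG _ hcyc
      · -- extend the path
        have hext : (Walk.cons hw.symm (Walk.cons h₀ r)).IsPath := by
          rw [Walk.cons_isPath_iff]
          exact ⟨hp, hmem⟩
        have := hmax _ _ _ hext
        simp at this


lemma seg_isClosed (x y : Point) : IsClosed (segment ℝ x y) := by
  rw [segment_eq_image']
  exact (isCompact_Icc.image (by continuity)).isClosed

lemma mem_seg_iff (c e q : Point) :
    q ∈ segment ℝ c (c + e) ↔ ∃ r : ℝ, 0 ≤ r ∧ r ≤ 1 ∧ q = c + r • e := by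
  rw [segment_eq_image']
  constructor
  · rintro ⟨θ, ⟨h0, h1⟩, rfl⟩; exact ⟨θ, h0, h1, by simp⟩
  · rintro ⟨r, h0, h1, rfl⟩; exact ⟨r, ⟨h0, h1⟩, by simp⟩

lemma center_mem_openSeg_iff (c d e : Point) :
    c ∈ openSegment ℝ (c + d) (c + e) ↔
      ∃ a b : ℝ, 0 < a ∧ 0 < b ∧ a + b = 1 ∧ a • d + b • e = 0 := by
  constructor
  · rintro ⟨a, b, ha, hb, hab, h⟩
    refine ⟨a, b, ha, hb, hab, ?_⟩
    have : a • (c + d) + b • (c + e) = (a + b) • c + (a • d + b • e) := by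
      simp [smul_add, add_smul]; abel
    rw [this, hab, one_smul] at h
    exact add_eq_left.mp h
  · rintro ⟨a, b, ha, hb, hab, h⟩
    refine ⟨a, b, ha, hb, hab, ?_⟩
    have : a • (c + d) + b • (c + e) = (a + b) • c + (a • d + b • e) := by
      simp [smul_add, add_smul]; abel
    rw [this, hab, one_smul, h, add_zero]

lemma seg_inter_eq (c d e : Point)
    (hQ : ∀ r s : ℝ, 0 ≤ r → 0 ≤ s → s • d = r • e → s = 0) :
    segment ℝ (c + d) c ∩ segment ℝ c (c + e) = {c} := by
  ext q
  simp only [Set.mem_inter_iff, Set.mem_singleton_iff]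
  constructor
  · rintro ⟨h1, h2⟩
    rw [segment_symm, mem_seg_iff] at h1
    rw [mem_seg_iff] at h2
    obtain ⟨s, hs0, hs1, rfl⟩ := h1
    obtain ⟨r, hr0, hr1, h⟩ := h2
    have heq : s • d = r • e := add_left_cancel h
    have hs := hQ r s hr0 hs0 heq
    simp [hs]
  · rintro rfl
    exact ⟨right_mem_segment _ _ _, left_mem_segment _ _ _⟩

lemma exists_good_dir (F : Finset Point) :
    ∃ d : Point, d ≠ 0 ∧ ∀ e ∈ F, ∀ r s : ℝ, s • d = r • e → s = 0 := by
  classical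
  set bad : Finset ℝ := F.image (fun e => e.2 / e.1) with hbad
  have hfin : {n : ℕ | ((n : ℝ)) ∈ bad}.Finite :=
    Set.Finite.preimage (Nat.cast_injective.injOn) bad.finite_toSet
  obtain ⟨n, hn⟩ := hfin.infinite_compl.nonempty
  refine ⟨(1, (n : ℝ)), by simp [Prod.ext_iff], ?_⟩
  intro e heF r s h
  have h1 : s * 1 = r * e.1 := congrArg Prod.fst h
  have h2 : s * (n : ℝ) = r * e.2 := congrArg Prod.snd h
  by_contra hs
  have hr : r ≠ 0 := by
    intro hr0; rw [hr0, zero_mul] at h1; simpa using hs (by linarith)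
  have he1 : e.1 ≠ 0 := by
    intro he0; rw [he0, mul_zero] at h1; exact hs (by linarith)
  have hnd : (n : ℝ) = e.2 / e.1 := by
    have h1' : s = r * e.1 := by linarith [h1]
    have key : r * ((n:ℝ) * e.1 - e.2) = 0 := by
      calc r * ((n:ℝ) * e.1 - e.2) = (r * e.1) * (n:ℝ) - r * e.2 := by ring
      _ = s * (n:ℝ) - r * e.2 := by rw [← h1']
      _ = 0 := by rw [h2]; ring
    have h3 : (n:ℝ) * e.1 - e.2 = 0 := by
      rcases mul_eq_zero.mp key with h' | h'
      · exact absurd h' hr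
      · exact h'
    rw [eq_div_iff he1]; linarith
  rw [Set.mem_compl_iff, Set.mem_setOf_eq] at hn
  exact hn (by rw [hnd, hbad]; exact Finset.mem_image_of_mem _ heF)


lemma main_forest {V : Type*} [Fintype V] (n : ℕ) :
    ∀ (G : SimpleGraph V), G.IsAcyclic → G.edgeSet.ncard ≤ n →
    ∀ (A : Sym2 V → Sym2 V → Prop), IsAlignment G A →
    ∃ f : V → Point, IsPlanarDrawing G f ∧
      ∀ u v w : V, G.Adj u v → G.Adj v w → u ≠ w →
        (f v ∈ openSegment ℝ (f u) (f w) ↔ A s(u, v) s(v, w)) := by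
  induction n with
  | zero =>
    intro G hG hcard A hA
    have hempty : G.edgeSet = ∅ := by
      rw [← Set.ncard_eq_zero (G.edgeSet.toFinite)]
      omega
    have hnoadj : ∀ a b : V, ¬G.Adj a b := by
      intro a b hab
      have : s(a, b) ∈ G.edgeSet := hab
      simp [hempty] at this
    refine ⟨fun x => (((Fintype.equivFin V x : ℕ) : ℝ), 0), ⟨⟨?_, ?_, ?_⟩, ?_⟩, ?_⟩
    · intro a b hab
      have h1 := congrArg Prod.fst hab
      simp only [Nat.cast_inj] at h1
      exact (Fintype.equivFin V).injective (Fin.val_injective h1)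
    · intro a b c hab _ _; exact absurd hab (hnoadj _ _)
    · intro a b c hab _ _; exact absurd hab (hnoadj _ _)
    · intro a b c d hab _ _ _ _ _; exact absurd hab (hnoadj _ _)
    · intro a b c hab _ _; exact absurd hab (hnoadj _ _)
  | succ n IH =>
    intro G hG hcard A hA
    by_cases hn : G.edgeSet.ncard ≤ n
    · exact IH G hG hn A hA
    have hne : G.edgeSet.Nonempty := Set.nonempty_of_ncard_ne_zero (by omega)
    obtain ⟨u, v, huv, hleaf⟩ := exists_leaf' G hG hne
    have hvu : v ≠ u := huv.ne'
    set G' := G.deleteEdges {s(u, v)} with hG'def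
    have hG'adj : ∀ a b : V, G'.Adj a b ↔ G.Adj a b ∧ s(a, b) ≠ s(u, v) := by
      intro a b
      rw [hG'def, SimpleGraph.deleteEdges_adj]
      simp
    have hG'le : G' ≤ G := SimpleGraph.deleteEdges_le _
    have hG'acyc : G'.IsAcyclic := fun x c hc => hG (c.mapLe hG'le) (hc.mapLe _)
    have hG'edge : G'.edgeSet = G.edgeSet \ {s(u, v)} := SimpleGraph.edgeSet_deleteEdges _
    have hcard' : G'.edgeSet.ncard ≤ n := by
      have hmem : s(u, v) ∈ G.edgeSet := huv
      rw [hG'edge, Set.ncard_diff_singleton_of_mem hmem]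
      omega
    set A' : Sym2 V → Sym2 V → Prop :=
      fun e e' => A e e' ∧ e ≠ s(u, v) ∧ e' ≠ s(u, v) with hA'def
    have hA' : IsAlignment G' A' := by
      constructor
      · rintro e e' ⟨h, h1, h2⟩; exact ⟨hA.symm _ _ h, h2, h1⟩
      · rintro e e' ⟨h, h1, h2⟩
        obtain ⟨m1, m2⟩ := hA.mem_edges _ _ h
        rw [hG'edge]
        exact ⟨⟨m1, h1⟩, ⟨m2, h2⟩⟩
      · rintro e e' ⟨h, _, _⟩; exact hA.ne _ _ h
      · rintro e e' ⟨h, _, _⟩; exact hA.share _ _ h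
      · rintro z e e₁ e₂ hz hz1 hz2 ⟨h1, _, _⟩ ⟨h2, _, _⟩
        exact hA.uniq z e e₁ e₂ hz hz1 hz2 h1 h2
    obtain ⟨f', hplanar', hiff'⟩ := IH G' hG'acyc hcard' A' hA'
    obtain ⟨⟨hinj, hprop2, hprop3⟩, hplan'⟩ := hplanar'
    have hadj_u : ∀ b, G.Adj u b → b = v := hleaf
    have hu_edge : ∀ a b : V, G.Adj a b → a ≠ u → b ≠ u → G'.Adj a b := by
      intro a b hab ha hb
      rw [hG'adj]
      refine ⟨hab, fun h => ?_⟩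
      have hu : u ∈ s(a, b) := by rw [h]; simp
      rw [Sym2.mem_iff] at hu
      rcases hu with h' | h'
      · exact ha h'.symm
      · exact hb h'.symm
    have hG'u : ∀ b, ¬G'.Adj u b := by
      intro b hb
      rw [hG'adj] at hb
      exact hb.2 (by rw [hadj_u b hb.1])
    set c := f' v with hc
    have hD : ∃ d : Point, d ≠ 0 ∧
        (∀ x : V, G'.Adj v x → ∀ r s : ℝ, 0 ≤ r → 0 ≤ s →
          s • d = r • (f' x - c) → s = 0) ∧
        (∀ x : V, G'.Adj v x → ∀ s r : ℝ, 0 < s →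
          s • d = r • (f' x - c) → A s(u, v) s(v, x)) ∧
        (∀ x : V, G'.Adj v x → A s(u, v) s(v, x) → ∀ t : ℝ, 0 < t →
          c ∈ openSegment ℝ (c + t • d) (f' x)) := by
      by_cases hpair : ∃ e, A s(u, v) e
      · obtain ⟨e₀, hae⟩ := hpair
        obtain ⟨z, hz1, hz2⟩ := hA.share _ _ hae
        obtain ⟨he₀G, he₀G'⟩ := hA.mem_edges _ _ hae
        have hv_mem : v ∈ e₀ := by
          rcases Sym2.mem_iff.mp hz1 with h | h
          · exfalso
            have hu_mem : u ∈ e₀ := h ▸ hz2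
            have hspec := Sym2.other_spec hu_mem
            have hadj : G.Adj u (Sym2.Mem.other hu_mem) := by
              rw [← SimpleGraph.mem_edgeSet, hspec]; exact he₀G'
            exact hA.ne _ _ hae (by rw [← hspec, hadj_u _ hadj])
          · exact h ▸ hz2
        set w := Sym2.Mem.other hv_mem with hwdef
        have hspec : s(v, w) = e₀ := Sym2.other_spec hv_mem
        have hA0 : A s(u, v) s(v, w) := by rw [hspec]; exact hae
        have hGvw : G.Adj v w := by rw [← SimpleGraph.mem_edgeSet, hspec]; exact he₀G'
        have hw_ne_v : w ≠ v := hGvw.ne'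
        have hw_ne_u : w ≠ u := by
          intro h
          apply hA.ne _ _ hA0
          rw [h]
          exact Sym2.eq_swap
        have hG'vw : G'.Adj v w := hu_edge v w hGvw hvu hw_ne_u
        have hew : f' w - c ≠ 0 := sub_ne_zero_of_ne (fun h => hw_ne_v (hinj h))
        have hd : c - f' w ≠ 0 := by
          intro h
          apply hew
          rw [← neg_sub c (f' w), h, neg_zero]
        have haux : ∀ x : V, G'.Adj v x → x ≠ w → ∀ s r : ℝ, 0 < s →
            s • (c - f' w) = r • (f' x - c) → False := by
          intro x hx hxw s r hs h
          have hx_ne_v : x ≠ v := hx.ne'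
          have hx_ne_u : x ≠ u := fun h' => hG'u v ((h' ▸ hx).symm)
          have hex : f' x - c ≠ 0 := sub_ne_zero_of_ne (fun h' => hx_ne_v (hinj h'))
          have h1 : s • (f' w - c) = (-r) • (f' x - c) := by
            rw [neg_smul, ← h, ← smul_neg, neg_sub]
          have h2 : f' w - c = (s⁻¹ * (-r)) • (f' x - c) := by
            rw [← smul_smul, ← h1, smul_smul, inv_mul_cancel₀ hs.ne', one_smul]
          set κ := s⁻¹ * (-r) with hκ
          have hκ0 : κ ≠ 0 := by
            intro h0
            rw [h0, zero_smul] at h2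
            exact hew h2
          rcases lt_or_gt_of_ne hκ0 with hκneg | hκpos
          · have h1κ : 0 < 1 - κ := by linarith
            have hopen : c ∈ openSegment ℝ (c + (f' w - c)) (c + (f' x - c)) := by
              rw [center_mem_openSeg_iff]
              refine ⟨1 / (1 - κ), -κ / (1 - κ), by positivity,
                div_pos (by linarith) h1κ,
                by rw [← add_div, div_eq_one_iff_eq h1κ.ne']; ring, ?_⟩
              rw [h2, smul_smul, ← add_smul]
              have hco : 1 / (1 - κ) * κ + -κ / (1 - κ) = 0 := by
                field_simp; ring
              rw [hco, zero_smul]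
            rw [show c + (f' w - c) = f' w by abel,
              show c + (f' x - c) = f' x by abel] at hopen
            have hWne : w ≠ x := fun h' => hxw h'.symm
            obtain ⟨hAA, -, -⟩ := (hiff' w v x hG'vw.symm hx hWne).mp hopen
            rw [show s(w, v) = s(v, w) from Sym2.eq_swap] at hAA
            have hcontr := hA.uniq v s(v, w) s(u, v) s(v, x) (by simp) (by simp) (by simp)
              (hA.symm _ _ hA0) hAA
            rw [Sym2.eq_iff] at hcontr
            rcases hcontr with ⟨hh1, hh2⟩ | ⟨hh1, hh2⟩
            · exact huv.ne hh1
            · exact hx_ne_u hh1.symm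
          · have hkey := hprop2 x v w hx.symm hG'vw hxw
            rw [← hc] at hkey
            set μ := min κ 1 with hμ
            have hμpos : 0 < μ := lt_min hκpos one_pos
            have hμ1 : μ ≤ 1 := min_le_right _ _
            have hμκ : μ ≤ κ := min_le_left _ _
            have hmem1 : c + μ • (f' x - c) ∈ segment ℝ (f' x) c := by
              have hm : c + μ • (f' x - c) ∈ segment ℝ c (c + (f' x - c)) :=
                (mem_seg_iff _ _ _).mpr ⟨μ, hμpos.le, hμ1, rfl⟩
              rw [show c + (f' x - c) = f' x by abel] at hm
              rwa [segment_symm ℝ (f' x) c]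
            have hmem2 : c + μ • (f' x - c) ∈ segment ℝ c (f' w) := by
              have hm : c + μ • (f' x - c) ∈ segment ℝ c (c + (f' w - c)) := by
                rw [mem_seg_iff]
                refine ⟨μ / κ, by positivity, by rw [div_le_one hκpos]; exact hμκ, ?_⟩
                rw [h2, smul_smul]
                congr 1
                rw [div_mul_cancel₀ _ hκpos.ne']
              rwa [show c + (f' w - c) = f' w by abel] at hm
            have hsing : c + μ • (f' x - c) ∈ ({c} : Set Point) := by
              rw [← hkey]; exact ⟨hmem1, hmem2⟩
            rw [Set.mem_singleton_iff] at hsing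
            have h0 : μ • (f' x - c) = 0 := add_eq_left.mp hsing
            rcases smul_eq_zero.mp h0 with h' | h'
            · exact hμpos.ne' h'
            · exact hex h'
        refine ⟨c - f' w, hd, ?_, ?_, ?_⟩
        · intro x hx r s hr hs h
          by_cases hxw : x = w
          · obtain rfl := hxw.symm
            have hh2 : (-s) • (f' w - c) = r • (f' w - c) := by
              rw [neg_smul, ← smul_neg, neg_sub]; exact h
            have hh3 : (-s - r) • (f' w - c) = 0 := by
              rw [sub_smul, hh2, sub_self]
            rcases smul_eq_zero.mp hh3 with h' | h'
            · linarith
            · exact absurd h' hew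
          · by_contra hs0
            exact haux x hx hxw s r (hs.lt_of_ne (Ne.symm hs0)) h
        · intro x hx s r hs h
          by_cases hxw : x = w
          · obtain rfl := hxw.symm
            exact hA0
          · exact absurd (haux x hx hxw s r hs h) not_false
        · intro x hx hAx t ht
          have hxw : x = w := by
            have h' := hA.uniq v s(u, v) s(v, x) s(v, w) (by simp) (by simp) (by simp)
              hAx hA0
            rw [Sym2.eq_iff] at h'
            rcases h' with ⟨hh1, hh2⟩ | ⟨hh1, hh2⟩
            · exact hh2
            · exact absurd hh1.symm hw_ne_v
          obtain rfl := hxw.symm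
          have h1t : (0:ℝ) < 1 + t := by linarith
          have hopen : c ∈ openSegment ℝ (c + t • (c - f' w)) (c + (f' w - c)) := by
            rw [center_mem_openSeg_iff]
            refine ⟨1 / (1 + t), t / (1 + t), by positivity, div_pos ht h1t,
              by rw [← add_div, div_eq_one_iff_eq h1t.ne'], ?_⟩
            rw [smul_smul, show c - f' w = -(f' w - c) by abel, smul_neg, ← neg_smul,
              ← add_smul]
            have hco : -(1 / (1 + t) * t) + t / (1 + t) = 0 := by
              field_simp; ring
            rw [hco, zero_smul]
          rwa [show c + (f' w - c) = f' w by abel] at hopen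
      · push_neg at hpair
        obtain ⟨d, hd, hgood⟩ :=
          exists_good_dir (Finset.image (fun x => f' x - c) Finset.univ)
        refine ⟨d, hd, ?_, ?_, ?_⟩
        · intro x hx r s _ _ h
          exact hgood _ (Finset.mem_image_of_mem _ (Finset.mem_univ x)) r s h
        · intro x hx s r hs h
          exact absurd (hgood _ (Finset.mem_image_of_mem _ (Finset.mem_univ x)) r s h)
            hs.ne'
        · intro x hx hAx t ht
          exact absurd hAx (hpair _)
    obtain ⟨d, hd, hE2, hE3, hE4⟩ := hD
    -- the bad closed set
    set K : Set Point := (⋃ x ∈ {x : V | x ≠ v}, {f' x}) ∪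
      (⋃ pq ∈ {pq : V × V | G'.Adj pq.1 pq.2 ∧ pq.1 ≠ v ∧ pq.2 ≠ v},
        segment ℝ (f' pq.1) (f' pq.2)) with hK
    have hKclosed : IsClosed K := by
      apply IsClosed.union
      · exact Set.Finite.isClosed_biUnion (Set.toFinite _) (fun i _ => isClosed_singleton)
      · exact Set.Finite.isClosed_biUnion (Set.toFinite _) (fun i _ => seg_isClosed _ _)
    have hcK : c ∉ K := by
      rw [hK]
      intro hmem
      rcases hmem with h | h
      · simp only [Set.mem_iUnion, Set.mem_singleton_iff, Set.mem_setOf_eq] at h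
        obtain ⟨x, hx, hcx⟩ := h
        exact hx (hinj hcx).symm
      · simp only [Set.mem_iUnion, Set.mem_setOf_eq] at h
        obtain ⟨pq, ⟨hadj, h1, h2⟩, hmem⟩ := h
        exact hprop3 pq.1 pq.2 v hadj (Ne.symm h1) (Ne.symm h2) hmem
    obtain ⟨ε, hε, hball⟩ := Metric.isOpen_iff.mp hKclosed.isOpen_compl c hcK
    have hdn : 0 < ‖d‖ := norm_pos_iff.mpr hd
    set t := ε / (2 * ‖d‖) with htdef
    have ht : 0 < t := by rw [htdef]; exact div_pos hε (by positivity)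
    set p := c + t • d with hp
    have hpc : dist p c = t * ‖d‖ := by
      rw [hp, dist_eq_norm]
      simp [norm_smul, abs_of_pos ht]
    have hpε : t * ‖d‖ < ε := by
      have h2 : t * ‖d‖ = ε / 2 := by
        rw [htdef]; field_simp
      rw [h2]; linarith
    have hpball : p ∈ Metric.ball c ε := by rw [Metric.mem_ball, hpc]; exact hpε
    have hsegball : segment ℝ p c ⊆ Metric.ball c ε :=
      (convex_ball c ε).segment_subset hpball (Metric.mem_ball_self hε)
    have hsegK : ∀ q ∈ segment ℝ p c, q ∉ K := fun q hq => hball (hsegball hq)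
    have hpK : p ∉ K := hball hpball
    have hKpt : ∀ x : V, x ≠ v → f' x ∈ K := by
      intro x hx
      rw [hK]
      exact Set.mem_union_left _ (Set.mem_biUnion hx rfl)
    have hKseg : ∀ a b : V, G'.Adj a b → a ≠ v → b ≠ v →
        segment ℝ (f' a) (f' b) ⊆ K := by
      intro a b hab ha hb q hq
      rw [hK]
      exact Set.mem_union_right _
        (Set.mem_biUnion (show ((a, b) : V × V) ∈ _ from ⟨hab, ha, hb⟩) hq)
    have hpc_ne : p ≠ c := by
      rw [hp]
      intro h
      have h0 : t • d = 0 := by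
        have := add_eq_left.mp h
        exact this
      rcases smul_eq_zero.mp h0 with h' | h'
      · exact ht.ne' h'
      · exact hd h'
    have hp_ne : ∀ x : V, x ≠ v → p ≠ f' x := fun x hx h => hpK (h ▸ hKpt x hx)
    set f := Function.update f' u p with hf
    have hfu : f u = p := Function.update_self _ _ _
    have hfx : ∀ x : V, x ≠ u → f x = f' x := fun x hx => Function.update_of_ne hx _ _
    have hfv : f v = c := (hfx v hvu).trans hc.symm
    -- intersection of the new edge with old edges at v
    have hintersect : ∀ x : V, G'.Adj v x →
        segment ℝ p c ∩ segment ℝ c (f' x) = {c} := by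
      intro x hx
      have hxe : c + (f' x - c) = f' x := by abel
      rw [hp, ← hxe]
      apply seg_inter_eq
      intro r s hr hs hsm
      rw [smul_smul] at hsm
      have h0 := hE2 x hx r (s * t) hr (mul_nonneg hs ht.le) hsm
      rcases mul_eq_zero.mp h0 with h' | h'
      · exact h'
      · exact absurd h' ht.ne'
    have hnotmem : ∀ x : V, G'.Adj v x → p ∉ segment ℝ c (f' x) := by
      intro x hx hmem
      have hxe : c + (f' x - c) = f' x := by abel
      rw [← hxe, mem_seg_iff] at hmem
      obtain ⟨r, hr0, hr1, heq⟩ := hmem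
      rw [hp] at heq
      have h1 : t • d = r • (f' x - c) := add_left_cancel heq
      exact ht.ne' (hE2 x hx r t hr0 ht.le h1)
    have halign : ∀ x : V, G'.Adj v x →
        (c ∈ openSegment ℝ p (f' x) ↔ A s(u, v) s(v, x)) := by
      intro x hx
      constructor
      · intro hmem
        have hxe : c + (f' x - c) = f' x := by abel
        rw [hp, ← hxe, center_mem_openSeg_iff] at hmem
        obtain ⟨a, b, ha, hb, hab, h0⟩ := hmem
        rw [smul_smul] at h0
        have h1 := eq_neg_of_add_eq_zero_left h0
        rw [← neg_smul] at h1
        exact hE3 x hx (a * t) (-b) (by positivity) h1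
      · intro hAx
        have := hE4 x hx hAx t ht
        rwa [hp]
    refine ⟨f, ⟨⟨?_, ?_, ?_⟩, ?_⟩, ?_⟩
    · -- injectivity
      intro x y hxy
      by_cases hx : x = u <;> by_cases hy : y = u
      · rw [hx, hy]
      · obtain rfl := hx.symm
        rw [hfu, hfx y hy] at hxy
        by_cases hyv : y = v
        · obtain rfl := hyv.symm; exact absurd (hxy.trans hc.symm) hpc_ne
        · exact absurd hxy (hp_ne y hyv)
      · obtain rfl := hy.symm
        rw [hfu, hfx x hx] at hxy
        by_cases hxv : x = v
        · obtain rfl := hxv.symm; exact absurd (hxy.symm.trans hc.symm) hpc_ne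
        · exact absurd hxy.symm (hp_ne x hxv)
      · rw [hfx x hx, hfx y hy] at hxy
        exact hinj hxy
    · -- properness (ii)
      intro a b e hab hbe hae
      by_cases hbu : b = u
      · obtain rfl := hbu.symm
        exact absurd ((hadj_u a hab.symm).trans (hadj_u e hbe).symm) hae
      by_cases hau : a = u
      · obtain rfl := hau.symm
        have hbv : b = v := hadj_u b hab
        obtain rfl := hbv.symm
        have heu : e ≠ u := Ne.symm hae
        have hG've : G'.Adj v e := hu_edge v e hbe hvu heu
        rw [hfu, hfv, hfx e heu]
        exact hintersect e hG've
      · by_cases heu : e = u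
        · obtain rfl := heu.symm
          have hbv : b = v := hadj_u b hbe.symm
          obtain rfl := hbv.symm
          have hG'va : G'.Adj v a := hu_edge v a hab.symm hvu hau
          rw [hfu, hfv, hfx a hau]
          rw [Set.inter_comm, show segment ℝ c p = segment ℝ p c from segment_symm ℝ _ _,
            show segment ℝ (f' a) c = segment ℝ c (f' a) from segment_symm ℝ _ _]
          exact hintersect a hG'va
        · have h1 : G'.Adj a b := hu_edge a b hab hau hbu
          have h2 : G'.Adj b e := hu_edge b e hbe hbu heu
          rw [hfx a hau, hfx b hbu, hfx e heu]
          exact hprop2 a b e h1 h2 hae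
    · -- properness (iii)
      intro a b x hab hxa hxb
      by_cases hau : a = u
      · obtain rfl := hau.symm
        have hbv : b = v := hadj_u b hab
        obtain rfl := hbv.symm
        rw [hfu, hfv, hfx x hxa]
        intro hmem
        exact hsegK (f' x) hmem (hKpt x hxb)
      · by_cases hbu : b = u
        · obtain rfl := hbu.symm
          have hav : a = v := hadj_u a hab.symm
          obtain rfl := hav.symm
          rw [hfu, hfv, hfx x hxb,
            show segment ℝ c p = segment ℝ p c from segment_symm ℝ _ _]
          intro hmem
          exact hsegK (f' x) hmem (hKpt x hxa)
        · have hG'ab : G'.Adj a b := hu_edge a b hab hau hbu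
          by_cases hxu : x = u
          · obtain rfl := hxu.symm
            rw [hfu, hfx a hau, hfx b hbu]
            by_cases hav : a = v
            · obtain rfl := hav.symm
              rw [← hc]
              exact hnotmem b hG'ab
            · by_cases hbv : b = v
              · obtain rfl := hbv.symm
                rw [← hc, show segment ℝ (f' a) c = segment ℝ c (f' a) from segment_symm ℝ _ _]
                exact hnotmem a hG'ab.symm
              · intro hmem
                exact hpK (hKseg a b hG'ab hav hbv hmem)
          · rw [hfx a hau, hfx b hbu, hfx x hxu]
            exact hprop3 a b x hG'ab hxa hxb
    · -- planarity
      have claim0 : ∀ a' b' : V, G'.Adj a' b' → a' ≠ v → b' ≠ v →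
          segment ℝ p c ∩ segment ℝ (f' a') (f' b') = ∅ := by
        intro a' b' h ha hb
        rw [Set.eq_empty_iff_forall_notMem]
        rintro q ⟨hq1, hq2⟩
        exact hsegK q hq1 (hKseg a' b' h ha hb hq2)
      intro a b a' b' hab ha'b' h1 h2 h3 h4
      by_cases hau : a = u
      · obtain rfl := hau.symm
        have hbv : b = v := hadj_u b hab
        obtain rfl := hbv.symm
        have hG'' : G'.Adj a' b' := hu_edge a' b' ha'b' (Ne.symm h1) (Ne.symm h2)
        rw [hfu, hfv, hfx a' (Ne.symm h1), hfx b' (Ne.symm h2)]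
        exact claim0 a' b' hG'' (Ne.symm h3) (Ne.symm h4)
      · by_cases hbu : b = u
        · obtain rfl := hbu.symm
          have hav : a = v := hadj_u a hab.symm
          obtain rfl := hav.symm
          rw [hfu, hfv, hfx a' (Ne.symm h3), hfx b' (Ne.symm h4),
            show segment ℝ c p = segment ℝ p c from segment_symm ℝ _ _]
          exact claim0 a' b' (hu_edge a' b' ha'b' (Ne.symm h3) (Ne.symm h4))
            (Ne.symm h1) (Ne.symm h2)
        · by_cases ha'u : a' = u
          · obtain rfl := ha'u.symm
            have hb'v : b' = v := hadj_u b' ha'b'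
            obtain rfl := hb'v.symm
            rw [Set.inter_comm, hfu, hfv, hfx a hau, hfx b hbu]
            exact claim0 a b (hu_edge a b hab hau hbu) h2 h4
          · by_cases hb'u : b' = u
            · obtain rfl := hb'u.symm
              have ha'v : a' = v := hadj_u a' ha'b'.symm
              obtain rfl := ha'v.symm
              rw [Set.inter_comm, hfu, hfv, hfx a hau, hfx b hbu,
                show segment ℝ c p = segment ℝ p c from segment_symm ℝ _ _]
              exact claim0 a b (hu_edge a b hab hau hbu) h1 h3
            · rw [hfx a hau, hfx b hbu, hfx a' ha'u, hfx b' hb'u]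
              exact hplan' a b a' b' (hu_edge a b hab hau hbu)
                (hu_edge a' b' ha'b' ha'u hb'u) h1 h2 h3 h4
    · -- alignment iff
      intro x m y hxm hmy hxy
      by_cases hmu : m = u
      · obtain rfl := hmu.symm
        exact absurd ((hadj_u x hxm.symm).trans (hadj_u y hmy).symm) hxy
      · by_cases hxu : x = u
        · obtain rfl := hxu.symm
          have hmv : m = v := hadj_u m hxm
          obtain rfl := hmv.symm
          have hyu : y ≠ u := Ne.symm hxy
          have hG'vy : G'.Adj v y := hu_edge v y hmy hvu hyu
          rw [hfu, hfv, hfx y hyu]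
          exact halign y hG'vy
        · by_cases hyu : y = u
          · obtain rfl := hyu.symm
            have hmv : m = v := hadj_u m hmy.symm
            obtain rfl := hmv.symm
            have hG'vx : G'.Adj v x := hu_edge v x hxm.symm hvu hxy
            rw [hfu, hfv, hfx x hxy, openSegment_symm]
            constructor
            · intro h
              have hAx := (halign x hG'vx).mp h
              have h2 := hA.symm _ _ hAx
              rwa [show s(v, x) = s(x, v) from Sym2.eq_swap,
                show s(u, v) = s(v, u) from Sym2.eq_swap] at h2
            · intro h
              apply (halign x hG'vx).mpr
              have h2 := hA.symm _ _ h
              rwa [show s(v, u) = s(u, v) from Sym2.eq_swap,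
                show s(x, v) = s(v, x) from Sym2.eq_swap] at h2
          · have h1 : G'.Adj x m := hu_edge x m hxm hxu hmu
            have h2 : G'.Adj m y := hu_edge m y hmy hmu hyu
            rw [hfx x hxu, hfx m hmu, hfx y hyu]
            constructor
            · intro h
              exact ((hiff' x m y h1 h2 hxy).mp h).1
            · intro h
              apply (hiff' x m y h1 h2 hxy).mpr
              refine ⟨h, fun hh => ?_, fun hh => ?_⟩
              · have : u ∈ s(x, m) := by rw [hh]; simp
                rw [Sym2.mem_iff] at this
                rcases this with h' | h'
                · exact hxu h'.symm
                · exact hmu h'.symm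
              · have : u ∈ s(m, y) := by rw [hh]; simp
                rw [Sym2.mem_iff] at this
                rcases this with h' | h'
                · exact hmu h'.symm
                · exact hyu h'.symm


/-- For every finite tree `T` and every alignment `A` of `T` there is
a planar straight-line drawing of `T` in which two incident edges are aligned
if and only if they form a pair of `A`. -/
theorem stmt1 {V : Type*} [Fintype V] (G : SimpleGraph V) (hT : G.IsTree)
    (A : Sym2 V → Sym2 V → Prop) (hA : IsAlignment G A) :
    ∃ f : V → Point, IsPlanarDrawing G f ∧
      ∀ u v w : V, G.Adj u v → G.Adj v w → u ≠ w →
        (f v ∈ openSegment ℝ (f u) (f w) ↔ A s(u, v) s(v, w)) := by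
  obtain ⟨f, h1, h2⟩ := main_forest G.edgeSet.ncard G hT.2 le_rfl A hA
  exact ⟨f, h1, h2⟩
end

section
/- Let (T, 𝒫) be a path-based tree support and let b ≥ 0. If there is a proper straight-line drawing of T in which every path of 𝒫 has at most b bends, then there is also a planar straight-line drawing of T in which every path of 𝒫 has at most b bends. In particular, the planar curve complexity of a path-based tree support equals its curve complexity. -/
open Classical

namespace Stmt2Aux


lemma seg_exists {a b c : Point} (h : b ∈ segment ℝ a c) :
    ∃ θ : ℝ, 0 ≤ θ ∧ θ ≤ 1 ∧ b = a + θ • (c - a) := by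
  rw [segment_eq_image'] at h
  obtain ⟨θ, hθ, h⟩ := h
  exact ⟨θ, hθ.1, hθ.2, h.symm⟩

lemma mem_seg_param {a c : Point} {θ : ℝ} (h0 : 0 ≤ θ) (h1 : θ ≤ 1) :
    a + θ • (c - a) ∈ segment ℝ a c := by
  rw [segment_eq_image']
  exact ⟨θ, ⟨h0, h1⟩, rfl⟩

lemma openSeg_exists {a b c : Point} (h : b ∈ openSegment ℝ a c) :
    ∃ θ : ℝ, 0 < θ ∧ θ < 1 ∧ b = a + θ • (c - a) := by
  rw [openSegment_eq_image'] at h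
  obtain ⟨θ, hθ, h⟩ := h
  exact ⟨θ, hθ.1, hθ.2, h.symm⟩

lemma mem_openSeg_param {a c : Point} {θ : ℝ} (h0 : 0 < θ) (h1 : θ < 1) :
    a + θ • (c - a) ∈ openSegment ℝ a c := by
  rw [openSegment_eq_image']
  exact ⟨θ, ⟨h0, h1⟩, rfl⟩

/-- From open segment membership, positive-ray relation. -/
lemma openSeg_ray {a b c : Point} (h : b ∈ openSegment ℝ a c) :
    ∃ s : ℝ, 0 < s ∧ c - b = s • (b - a) := by
  obtain ⟨θ, h0, h1, rfl⟩ := openSeg_exists h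
  refine ⟨(1 - θ) / θ, div_pos (by linarith) h0, ?_⟩
  have hθ : θ ≠ 0 := ne_of_gt h0
  rw [add_sub_cancel_left, smul_smul, div_mul_cancel₀ _ hθ]
  module

/-- Converse: positive-ray relation gives open segment membership. -/
lemma ray_openSeg {a b c : Point} {s : ℝ} (hs : 0 < s) (h : c - b = s • (b - a)) :
    b ∈ openSegment ℝ a c := by
  have h1s : (0:ℝ) < 1 + s := by linarith
  have hb : b = a + (1 / (1 + s)) • (c - a) := by
    have hca : c - a = (1 + s) • (b - a) := by
      have : c - a = (c - b) + (b - a) := by abel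
      rw [this, h]; module
    rw [hca, smul_smul, one_div, inv_mul_cancel₀ (ne_of_gt h1s)]
    module
  rw [hb]
  exact mem_openSeg_param (by positivity) (by rw [div_lt_one h1s]; linarith)

/-- If `y - p` is a positive multiple of `x - p` then the segments `[x,p]` and `[p,y]`
meet in a point other than `p`; contradiction with properness. -/
lemma seg_inter_ne {p x y : Point} (hx : x ≠ p) {r : ℝ} (hr : 0 < r)
    (hxy : y - p = r • (x - p)) (h : segment ℝ x p ∩ segment ℝ p y = {p}) : False := by
  set q := p + min r 1 • (x - p) with hq
  have hmin0 : 0 < min r 1 := lt_min hr one_pos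
  have hq1 : q ∈ segment ℝ p x := mem_seg_param (le_of_lt hmin0) (min_le_right _ _)
  have hq2 : q ∈ segment ℝ p y := by
    have : q = p + (min r 1 / r) • (y - p) := by
      rw [hxy, smul_smul, div_mul_cancel₀ _ (ne_of_gt hr)]
    rw [this]
    have := hxy
    exact mem_seg_param (by positivity) (div_le_one_of_le₀ (min_le_left _ _) (le_of_lt hr))
  have : q ∈ ({p} : Set Point) := by
    rw [← h]; exact ⟨by rwa [segment_symm], hq2⟩
  have hqp : q = p := this
  rw [hq] at hqp
  have : min r 1 • (x - p) = 0 := by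
    have := congrArg (fun z => z - p) hqp
    simpa using this
  rcases smul_eq_zero.mp this with h' | h'
  · exact (ne_of_gt hmin0) h'
  · exact hx (sub_eq_zero.mp h')


end Stmt2Aux

namespace Stmt2Aux2


lemma mem_seg_param {a c : Point} {θ : ℝ} (h0 : 0 ≤ θ) (h1 : θ ≤ 1) :
    a + θ • (c - a) ∈ segment ℝ a c := by
  rw [segment_eq_image']; exact ⟨θ, ⟨h0, h1⟩, rfl⟩

lemma mem_openSeg_param {a c : Point} {θ : ℝ} (h0 : 0 < θ) (h1 : θ < 1) :
    a + θ • (c - a) ∈ openSegment ℝ a c := by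
  rw [openSegment_eq_image']; exact ⟨θ, ⟨h0, h1⟩, rfl⟩

lemma seg_exists {a b c : Point} (h : b ∈ segment ℝ a c) :
    ∃ θ : ℝ, 0 ≤ θ ∧ θ ≤ 1 ∧ b = a + θ • (c - a) := by
  rw [segment_eq_image'] at h; obtain ⟨θ, hθ, h⟩ := h; exact ⟨θ, hθ.1, hθ.2, h.symm⟩

lemma openSeg_exists {a b c : Point} (h : b ∈ openSegment ℝ a c) :
    ∃ θ : ℝ, 0 < θ ∧ θ < 1 ∧ b = a + θ • (c - a) := by
  rw [openSegment_eq_image'] at h; obtain ⟨θ, hθ, h⟩ := h; exact ⟨θ, hθ.1, hθ.2, h.symm⟩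

lemma openSeg_ray {a b c : Point} (h : b ∈ openSegment ℝ a c) :
    ∃ s : ℝ, 0 < s ∧ c - b = s • (b - a) := by
  obtain ⟨θ, h0, h1, rfl⟩ := openSeg_exists h
  refine ⟨(1 - θ) / θ, div_pos (by linarith) h0, ?_⟩
  have hθ : θ ≠ 0 := ne_of_gt h0
  rw [add_sub_cancel_left, smul_smul, div_mul_cancel₀ _ hθ]
  module

lemma ray_openSeg {a b c : Point} {s : ℝ} (hs : 0 < s) (h : c - b = s • (b - a)) :
    b ∈ openSegment ℝ a c := by
  have h1s : (0:ℝ) < 1 + s := by linarith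
  have hb : b = a + (1 / (1 + s)) • (c - a) := by
    have hca : c - a = (1 + s) • (b - a) := by
      have h2 : c - a = (c - b) + (b - a) := by abel
      rw [h2, h]; module
    rw [hca, smul_smul, one_div, inv_mul_cancel₀ (ne_of_gt h1s)]
    module
  rw [hb]
  exact mem_openSeg_param (by positivity) (by rw [div_lt_one h1s]; linarith)

lemma seg_from_point_inter {c z d : Point} (hd : d ≠ 0) {t : ℝ} (ht : 0 < t)
    (hray : ∀ r : ℝ, 0 < r → z - c ≠ r • d) :
    segment ℝ c (c + t • d) ∩ segment ℝ c z = {c} := by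
  apply Set.eq_singleton_iff_unique_mem.mpr
  refine ⟨⟨left_mem_segment ℝ _ _, left_mem_segment ℝ _ _⟩, ?_⟩
  rintro q ⟨h1, h2⟩
  obtain ⟨θ, hθ0, hθ1, hb⟩ := seg_exists h1
  rw [add_sub_cancel_left] at hb
  obtain ⟨θ', hθ'0, hθ'1, hb'⟩ := seg_exists h2
  by_contra hq
  have hθpos : 0 < θ := by
    rcases lt_or_eq_of_le hθ0 with h | h
    · exact h
    · exact absurd (by rw [hb, ← h, zero_smul, add_zero]) hq
  have hθ'pos : 0 < θ' := by
    rcases lt_or_eq_of_le hθ'0 with h | h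
    · exact h
    · exact absurd (by rw [hb', ← h, zero_smul, add_zero]) hq
  have hkey : z - c = ((θ * t) / θ') • d := by
    have h0 : θ' • (z - c) = (θ * t) • d := by
      have h3 : c + θ • t • d = c + θ' • (z - c) := by rw [← hb, ← hb']
      have h4 := add_left_cancel h3
      rw [← h4, smul_smul]
    have h5 := congrArg (fun w => (θ'⁻¹ : ℝ) • w) h0
    simp only [smul_smul, inv_mul_cancel₀ (ne_of_gt hθ'pos), one_smul] at h5
    rw [h5]
    congr 1
    field_simp
  exact hray _ (by positivity) hkey

lemma not_mem_ray_seg {c z d : Point} (hd : d ≠ 0) {t : ℝ} (ht : 0 < t)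
    (hray : ∀ r : ℝ, 0 < r → z - c ≠ r • d) :
    c + t • d ∉ segment ℝ c z := by
  intro hmem
  have h := seg_from_point_inter hd ht hray
  have h2 : c + t • d ∈ ({c} : Set Point) := by
    rw [← h]; exact ⟨right_mem_segment ℝ _ _, hmem⟩
  have h3 : t • d = 0 := by
    have := congrArg (fun w => w - c) (Set.mem_singleton_iff.mp h2)
    simpa using this
  rcases smul_eq_zero.mp h3 with h' | h'
  · exact (ne_of_gt ht) h'
  · exact hd h'

lemma align_iff_ray {c z d : Point} (hd : d ≠ 0) {t : ℝ} (ht : 0 < t) :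
    c ∈ openSegment ℝ (c + t • d) z ↔ ∃ s : ℝ, 0 < s ∧ z - c = s • (-d) := by
  constructor
  · intro h
    obtain ⟨s, hs, hray⟩ := openSeg_ray h
    refine ⟨s * t, by positivity, ?_⟩
    rw [hray]
    have h1 : c - (c + t • d) = -(t • d) := by abel
    rw [h1]; module
  · rintro ⟨s, hs, hz⟩
    apply ray_openSeg (s := s / t) (by positivity)
    have h1 : c - (c + t • d) = -(t • d) := by abel
    rw [hz, h1]
    rw [smul_neg, smul_neg, smul_smul, div_mul_comm, div_self (ne_of_gt ht), one_mul]

lemma seg_subset_ball {c d : Point} {t ε : ℝ} (ht : 0 ≤ t) (h : t * ‖d‖ < ε) :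
    segment ℝ c (c + t • d) ⊆ Metric.ball c ε := by
  intro q hq
  obtain ⟨θ, hθ0, hθ1, hb⟩ := seg_exists hq
  rw [add_sub_cancel_left] at hb
  rw [Metric.mem_ball, dist_eq_norm, hb]
  have h1 : c + θ • t • d - c = θ • t • d := by abel
  rw [h1, norm_smul, norm_smul]
  calc ‖θ‖ * (‖t‖ * ‖d‖) ≤ 1 * (t * ‖d‖) := by
        apply mul_le_mul
        · rw [Real.norm_eq_abs]; exact abs_le.mpr ⟨by linarith, hθ1⟩
        · rw [Real.norm_eq_abs, abs_of_nonneg ht]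
        · positivity
        · norm_num
      _ < ε := by rwa [one_mul]

lemma isCompact_seg (x y : Point) : IsCompact (segment ℝ x y) := by
  rw [segment_eq_image']
  exact (isCompact_Icc).image (by continuity)


end Stmt2Aux2

namespace Stmt2Tree


universe u
variable {V : Type u} {G : SimpleGraph V}

/-- In a connected graph with at least two vertices, every vertex has a neighbor. -/
lemma exists_adj_of_connected [Fintype V] (hc : G.Connected) (hcard : 1 < Fintype.card V)
    (x : V) : ∃ y, G.Adj x y := by
  obtain ⟨y, hy⟩ := Fintype.exists_ne_of_one_lt_card hcard x
  obtain ⟨p⟩ := hc.preconnected x y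
  cases p with
  | nil => exact absurd rfl hy.symm
  | cons h q => exact ⟨_, h⟩

/-- A finite tree with an edge has a leaf: a vertex with a unique neighbor. -/
lemma exists_leaf [Fintype V] (hT : G.IsTree) {a b : V} (hab : G.Adj a b) :
    ∃ v w : V, G.Adj v w ∧ ∀ y, G.Adj v y → y = w := by
  haveI : DecidableEq V := Classical.decEq V
  haveI : DecidableRel G.Adj := Classical.decRel _
  have hcard : 1 < Fintype.card V := Fintype.one_lt_card_iff_nontrivial.mpr ⟨a, b, hab.ne⟩
  -- some vertex has degree 1
  have hdeg1 : ∃ v, G.degree v = 1 := by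
    by_contra hno
    push_neg at hno
    have hge : ∀ v, 2 ≤ G.degree v := by
      intro v
      obtain ⟨y, hy⟩ := exists_adj_of_connected hT.isConnected hcard v
      have h1 : 0 < G.degree v := (SimpleGraph.degree_pos_iff_exists_adj G v).mpr ⟨y, hy⟩
      have h2 := hno v
      omega
    have hsum : ∑ v : V, G.degree v = 2 * G.edgeFinset.card :=
      G.sum_degrees_eq_twice_card_edges
    have hEc : G.edgeFinset.card + 1 = Fintype.card V := hT.card_edgeFinset
    have hsum2 : 2 * Fintype.card V ≤ ∑ v : V, G.degree v := by
      calc 2 * Fintype.card V = ∑ _v : V, 2 := by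
            rw [Finset.sum_const, Finset.card_univ, smul_eq_mul, mul_comm]
        _ ≤ ∑ v : V, G.degree v := Finset.sum_le_sum (fun v _ => hge v)
    omega
  obtain ⟨v, hv⟩ := hdeg1
  have : (G.neighborFinset v).card = 1 := hv
  obtain ⟨w, hw⟩ := Finset.card_eq_one.mp this
  refine ⟨v, w, ?_, ?_⟩
  · rw [← SimpleGraph.mem_neighborFinset, hw]; exact Finset.mem_singleton_self w
  · intro y hy
    have : y ∈ G.neighborFinset v := (SimpleGraph.mem_neighborFinset G v y).mpr hy
    rw [hw] at this
    exact Finset.mem_singleton.mp this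


/-- Lift a walk avoiding `v` to the induced graph on the complement of `v`. -/
lemma reach_lift {v : V} :
    ∀ {a b : V} (p : G.Walk a b) (_hsup : ∀ x ∈ p.support, x ≠ v) (ha : a ≠ v) (hb : b ≠ v),
      (G.comap (Subtype.val : {x : V // x ≠ v} → V)).Reachable ⟨a, ha⟩ ⟨b, hb⟩ := by
  intro a b p
  induction p with
  | nil => intro _ ha hb; rfl
  | @cons a c b h q ih =>
    intro hsup ha hb
    have hc : c ≠ v := hsup c (by simp [SimpleGraph.Walk.support_cons, q.start_mem_support])
    have hadj : (G.comap (Subtype.val : {x : V // x ≠ v} → V)).Adj ⟨a, ha⟩ ⟨c, hc⟩ := h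
    exact (hadj.reachable).trans
      (ih (fun x hx => hsup x (by simp [SimpleGraph.Walk.support_cons, hx])) hc hb)

/-- Removing a leaf from a tree leaves a connected graph. -/
lemma comap_connected {v w : V} (hT : G.IsTree) (hvw : G.Adj v w)
    (huniq : ∀ y, G.Adj v y → y = w) :
    (G.comap (Subtype.val : {x : V // x ≠ v} → V)).Connected := by
  rw [SimpleGraph.connected_iff]
  refine ⟨?_, ⟨⟨w, hvw.ne'⟩⟩⟩
  rintro ⟨x, hx⟩ ⟨y, hy⟩
  obtain ⟨p0⟩ := hT.isConnected.preconnected x y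
  have hpath := p0.toPath.2
  set p : G.Walk x y := p0.toPath.1 with hp
  by_cases hv : v ∈ p.support
  · exfalso
    have hspec := SimpleGraph.Walk.take_spec p hv
    set p1 := p.takeUntil v hv with hp1
    set p2 := p.dropUntil v hv with hp2
    have hnd : p.support.Nodup := hpath.support_nodup
    have hsupp : p.support = p1.support ++ p2.support.tail := by
      rw [← hspec, SimpleGraph.Walk.support_append]
    -- w occurs in p1.support
    have hw1 : w ∈ p1.support := by
      obtain ⟨z, hadj, q, hq⟩ := SimpleGraph.Walk.exists_eq_cons_of_ne (Ne.symm hx) p1.reverse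
      have hz : z = w := huniq z hadj
      have : z ∈ p1.reverse.support := by
        rw [hq, SimpleGraph.Walk.support_cons]
        exact List.mem_cons_of_mem _ q.start_mem_support
      rw [SimpleGraph.Walk.support_reverse, List.mem_reverse] at this
      rwa [← hz]
    -- w occurs in p2.support.tail
    have hw2 : w ∈ p2.support.tail := by
      obtain ⟨z, hadj, q, hq⟩ := SimpleGraph.Walk.exists_eq_cons_of_ne hy.symm p2
      have hz : z = w := huniq z hadj
      rw [hq, SimpleGraph.Walk.support_cons]
      rw [← hz]
      exact q.start_mem_support
    rw [hsupp] at hnd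
    have hdisj := (List.nodup_append'.mp hnd).2.2
    exact hdisj hw1 hw2
  · exact reach_lift p (fun z hz hzv => hv (by rwa [hzv] at hz)) hx hy

/-- The induced graph on the complement of a vertex of an acyclic graph is acyclic. -/
lemma comap_acyclic {v : V} (hA : G.IsAcyclic) :
    (G.comap (Subtype.val : {x : V // x ≠ v} → V)).IsAcyclic := by
  intro u c hc
  have hmap : (c.map (SimpleGraph.Hom.comap Subtype.val G)).IsCycle :=
    hc.map Subtype.val_injective
  exact hA _ hmap


end Stmt2Tree

namespace Stmt2Main


lemma restrict_proper {V : Type*} {G : SimpleGraph V} {f : V → Point}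
    (hf : IsProperDrawing G f) (v : V) :
    IsProperDrawing (G.comap (Subtype.val : {x : V // x ≠ v} → V)) (fun a => f a.val) := by
  obtain ⟨hinj, h2, h3⟩ := hf
  refine ⟨fun a b h => Subtype.ext (hinj h), ?_, ?_⟩
  · intro u w x hu hw hne
    exact h2 u.val w.val x.val hu hw (fun h => hne (Subtype.ext h))
  · intro u w x hu hxu hxw
    exact h3 u.val w.val x.val hu (fun h => hxu (Subtype.ext h)) (fun h => hxw (Subtype.ext h))

universe u

lemma main : ∀ (n : ℕ) {V : Type u} [Fintype V] (G : SimpleGraph V) (f : V → Point),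
    Fintype.card V ≤ n → G.IsTree → IsProperDrawing G f →
    ∃ f' : V → Point, IsPlanarDrawing G f' ∧
      ∀ u v w : V, G.Adj u v → G.Adj v w → u ≠ w →
        (f v ∈ openSegment ℝ (f u) (f w) ↔ f' v ∈ openSegment ℝ (f' u) (f' w)) := by
  intro n
  induction n with
  | zero =>
    intro V _ G f hcard hT _
    exfalso
    have : 0 < Fintype.card V := Fintype.card_pos_iff.mpr hT.isConnected.nonempty
    omega
  | succ n ih =>
    intro V _ G f hcard hT hf
    by_cases hE : ∃ a b : V, G.Adj a b
    case neg =>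
      refine ⟨f, ⟨hf, ?_⟩, ?_⟩
      · intro u₁ v₁ w₁ x₁ h1 _ _ _ _ _; exact (hE ⟨_, _, h1⟩).elim
      · intro u₁ v₁ w₁ h1 _ _; exact (hE ⟨_, _, h1⟩).elim
    case pos =>
    obtain ⟨a, b, hab⟩ := hE
    obtain ⟨v, w, hvw, huniq⟩ := Stmt2Tree.exists_leaf hT hab
    have hwv : w ≠ v := hvw.ne'
    haveI : DecidableEq V := Classical.decEq V
    set V' := {x : V // x ≠ v} with hV'
    haveI : DecidablePred (fun x : V => x ≠ v) := fun x => instDecidableNot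
    set G' : SimpleGraph V' := G.comap Subtype.val with hG'
    have hT' : G'.IsTree :=
      ⟨Stmt2Tree.comap_connected hT hvw huniq, Stmt2Tree.comap_acyclic hT.IsAcyclic⟩
    have hcard' : Fintype.card V' ≤ n := by
      have h1 : Fintype.card V' < Fintype.card V := by
        apply Fintype.card_subtype_lt (x := v)
        simp
      omega
    obtain ⟨f'', hpl'', hiff''⟩ := ih G' (fun a => f a.val) hcard' hT' (restrict_proper hf v)
    obtain ⟨⟨hinj'', hprop2'', hprop3''⟩, hplan''⟩ := hpl''
    set w' : V' := ⟨w, hwv⟩ with hw'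
    set c : Point := f'' w' with hc
    -- choose the direction d
    have hdir : ∃ d : Point, d ≠ 0 ∧
        (∀ y : V', G'.Adj w' y → ∀ r : ℝ, 0 < r → f'' y - c ≠ r • d) ∧
        (∀ y : V', G'.Adj w' y →
          ((f w ∈ openSegment ℝ (f v) (f y.val)) ↔ ∃ s : ℝ, 0 < s ∧ f'' y - c = s • (-d))) := by
      by_cases hx : ∃ x : V', G'.Adj w' x ∧ f w ∈ openSegment ℝ (f v) (f x.val)
      · obtain ⟨x, hxadj, hxal⟩ := hx
        have hwx : G.Adj w x.val := hxadj
        refine ⟨c - f'' x, ?_, ?_, ?_⟩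
        · exact sub_ne_zero.mpr (fun h => hxadj.ne (hinj'' h))
        · -- no positive ray
          intro y hyadj r hr hrel
          by_cases hyx : y = x
          · subst hyx
            have hzz : (1 + r) • (f'' y - c) = 0 := by
              have h2 : f'' y - c = r • (c - f'' y) := hrel
              calc (1 + r) • (f'' y - c) = (f'' y - c) + r • (f'' y - c) := by module
                _ = r • (c - f'' y) + r • (f'' y - c) := by rw [← h2]
                _ = 0 := by module
            rcases smul_eq_zero.mp hzz with h' | h'
            · have : (0:ℝ) < 1 + r := by linarith
              exact absurd h' (ne_of_gt this)
            · exact hxadj.ne (hinj'' (sub_eq_zero.mp h').symm).symm.symm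
          · -- c between f''x and f''y, transfer to f, contradiction with properness of f
            have hbet : c ∈ openSegment ℝ (f'' x) (f'' y) := by
              apply Stmt2Aux2.ray_openSeg (s := r) hr
              rw [hrel]
            have hbetf : f w ∈ openSegment ℝ (f x.val) (f y.val) :=
              (hiff'' x w' y hxadj.symm hyadj (fun h => hyx (h.symm))).mpr hbet
            obtain ⟨s2, hs2, hrel2⟩ := Stmt2Aux2.openSeg_ray hxal
            obtain ⟨s3, hs3, hrel3⟩ := Stmt2Aux2.openSeg_ray hbetf
            have hrel4 : f y.val - f w = (s3 * s2) • (f v - f w) := by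
              rw [hrel3]
              have : f w - f x.val = s2 • (f v - f w) := by
                have := hrel2
                have h5 : f w - f x.val = -(f x.val - f w) := by abel
                rw [h5, this]; module
              rw [this, smul_smul]
            exact Stmt2Aux.seg_inter_ne
              (fun h => hvw.ne (hf.1 h)) (by positivity) hrel4
              (hf.2.1 v w y.val hvw hyadj (fun h => y.2 h.symm))
        · -- alignment characterization
          intro y hyadj
          constructor
          · intro hyal
            have hyx : y = x := by
              by_contra hyx
              obtain ⟨s2, hs2, hrel2⟩ := Stmt2Aux2.openSeg_ray hxal
              obtain ⟨sy, hsy, hrely⟩ := Stmt2Aux2.openSeg_ray hyal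
              have hrel4 : f y.val - f w = (sy / s2) • (f x.val - f w) := by
                rw [hrely, hrel2, smul_smul, div_mul_cancel₀ _ (ne_of_gt hs2)]
              exact Stmt2Aux.seg_inter_ne
                (fun h => hwx.ne' (hf.1 h)) (by positivity) hrel4
                (hf.2.1 x.val w y.val hwx.symm hyadj
                  (fun h => hyx (Subtype.ext h.symm).symm.symm))
            subst hyx
            exact ⟨1, one_pos, by rw [one_smul]; abel⟩
          · rintro ⟨s, hs, hrel⟩
            have hyx : y = x := by
              by_contra hyx
              have hrel2 : f'' y - c = s • (f'' x - c) := by rw [hrel]; module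
              exact Stmt2Aux.seg_inter_ne
                (fun h => hxadj.ne' (hinj'' h)) hs hrel2
                (hprop2'' x w' y hxadj.symm hyadj (fun h => hyx (h.symm)))
            subst hyx
            exact hxal
      · -- no aligned partner: pick a generic direction
        obtain ⟨k, hk⟩ := Infinite.exists_notMem_finset
          (Finset.univ.image (fun y : V' => (f'' y - c).2 / (f'' y - c).1))
        have hgen : ∀ (y : V') (r : ℝ), r ≠ 0 → f'' y - c ≠ r • ((1:ℝ), k) := by
          intro y r hr hrel
          apply hk
          apply Finset.mem_image.mpr
          refine ⟨y, Finset.mem_univ y, ?_⟩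
          have h1 : (f'' y - c).1 = r := by rw [hrel]; simp
          have h2 : (f'' y - c).2 = r * k := by rw [hrel]; simp
          rw [h1, h2, mul_comm, mul_div_assoc, div_self hr, mul_one]
        refine ⟨((1:ℝ), k), by simp, ?_, ?_⟩
        · intro y _ r hr; exact hgen y r (ne_of_gt hr)
        · intro y hyadj
          constructor
          · intro hyal; exact absurd ⟨y, hyadj, hyal⟩ hx
          · rintro ⟨s, hs, hrel⟩
            exfalso
            apply hgen y (-s) (by linarith)
            rw [hrel]; module
    obtain ⟨d, hd, hrayP, halignA⟩ := hdir
    -- obstacle set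
    set S : Set Point :=
      (⋃ p : {p : V' × V' // G'.Adj p.1 p.2 ∧ p.1 ≠ w' ∧ p.2 ≠ w'},
        segment ℝ (f'' p.val.1) (f'' p.val.2)) ∪ (Set.range f'' \ {c}) with hS
    have hSclosed : IsClosed S := by
      apply IsClosed.union
      · exact isClosed_iUnion_of_finite (fun p => (Stmt2Aux2.isCompact_seg _ _).isClosed)
      · exact ((Set.finite_range f'').diff (t := {c})).isClosed
    have hcS : c ∉ S := by
      rintro (h | h)
      · obtain ⟨p, hp⟩ := Set.mem_iUnion.mp h
        exact hprop3'' p.val.1 p.val.2 w' p.prop.1 (Ne.symm p.prop.2.1) (Ne.symm p.prop.2.2) hp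
      · exact h.2 rfl
    obtain ⟨ε, hε, hball⟩ := Metric.isOpen_iff.mp hSclosed.isOpen_compl c hcS
    set t : ℝ := ε / (2 * (‖d‖ + 1)) with htdef
    have ht : 0 < t := by positivity
    have htd : t * ‖d‖ < ε := by
      have h1 : t * ‖d‖ ≤ t * (‖d‖ + 1) := by nlinarith [ht.le]
      have h2 : t * (‖d‖ + 1) = ε / 2 := by
        rw [htdef]; field_simp
      linarith
    set q0 : Point := c + t • d with hq0def
    have hq0ball : segment ℝ c q0 ⊆ Metric.ball c ε := Stmt2Aux2.seg_subset_ball ht.le htd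
    have hsegS : ∀ z ∈ segment ℝ c q0, z ∉ S := fun z hz => hball (hq0ball hz)
    have hq0c : q0 ≠ c := by
      rw [hq0def]
      intro h
      have h4 : t • d = 0 := by
        have := congrArg (fun z => z - c) h; simpa using this
      rcases smul_eq_zero.mp h4 with h' | h'
      · exact (ne_of_gt ht) h'
      · exact hd h'
    have hq0S : q0 ∉ S := hsegS q0 (right_mem_segment ℝ c q0)
    have hrange : ∀ y : V', y ≠ w' → f'' y ∈ S := by
      intro y hy
      exact Or.inr ⟨Set.mem_range_self y, fun h => hy (hinj'' h)⟩
    have hsegmem : ∀ (aa bb : V'), G'.Adj aa bb → aa ≠ w' → bb ≠ w' →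
        segment ℝ (f'' aa) (f'' bb) ⊆ S := by
      intro aa bb hadj ha hb z hz
      exact Or.inl (Set.mem_iUnion.mpr ⟨⟨(aa, bb), hadj, ha, hb⟩, hz⟩)
    set f' : V → Point := fun a => if h : a = v then q0 else f'' ⟨a, h⟩ with hf'def
    have hf'v : f' v = q0 := by rw [hf'def]; simp
    have hf'ne : ∀ (a : V) (h : a ≠ v), f' a = f'' ⟨a, h⟩ := by
      intro a h; rw [hf'def]; simp [h]
    have hf'w : f' w = c := by rw [hf'ne w hwv]
    have hq0notf : ∀ y : V', q0 ≠ f'' y := by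
      intro y h
      by_cases hyw : y = w'
      · exact hq0c (by rw [h, hyw])
      · exact hq0S (h ▸ hrange y hyw)
    have hsub : ∀ (a : V) (h : a ≠ v), a ≠ w → (⟨a, h⟩ : V') ≠ w' := by
      intro a h haw hh
      exact haw (congrArg Subtype.val hh)
    -- the new-edge helper results
    have hres : ∀ (z : Point), (∀ r : ℝ, 0 < r → z - c ≠ r • d) →
        segment ℝ c q0 ∩ segment ℝ c z = {c} := by
      intro z hz
      have := Stmt2Aux2.seg_from_point_inter (c := c) (z := z) hd ht hz
      rwa [← hq0def] at this
    have hnotmem : ∀ (z : Point), (∀ r : ℝ, 0 < r → z - c ≠ r • d) →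
        q0 ∉ segment ℝ c z := by
      intro z hz
      have := Stmt2Aux2.not_mem_ray_seg (c := c) (z := z) hd ht hz
      rwa [← hq0def] at this
    have hgeom : ∀ z : Point,
        (c ∈ openSegment ℝ q0 z ↔ ∃ s : ℝ, 0 < s ∧ z - c = s • (-d)) := by
      intro z
      have := Stmt2Aux2.align_iff_ray (c := c) (z := z) hd ht
      rwa [← hq0def] at this
    -- injectivity
    have hinj' : Function.Injective f' := by
      intro p q h
      by_cases hp : p = v <;> by_cases hq : q = v
      · rw [hp, hq]
      · exfalso
        rw [hp, hf'v, hf'ne q hq] at h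
        exact hq0notf ⟨q, hq⟩ h
      · exfalso
        rw [hq, hf'v, hf'ne p hp] at h
        exact hq0notf ⟨p, hp⟩ h.symm
      · rw [hf'ne p hp, hf'ne q hq] at h
        exact congrArg Subtype.val (hinj'' h)
    -- properness (ii)
    have hprop2' : ∀ u₁ v₁ w₁ : V, G.Adj u₁ v₁ → G.Adj v₁ w₁ → u₁ ≠ w₁ →
        segment ℝ (f' u₁) (f' v₁) ∩ segment ℝ (f' v₁) (f' w₁) = {f' v₁} := by
      intro u₁ v₁ w₁ h1 h2 hne
      by_cases hv₁ : v₁ = v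
      · exfalso
        have hu₁w : u₁ = w := huniq u₁ (by rw [hv₁] at h1; exact h1.symm)
        have hw₁w : w₁ = w := huniq w₁ (by rw [hv₁] at h2; exact h2)
        exact hne (hu₁w.trans hw₁w.symm)
      · by_cases hu₁ : u₁ = v
        · have hv₁w : v₁ = w := huniq v₁ (by rw [hu₁] at h1; exact h1)
          have hw₁v : w₁ ≠ v := fun h => hne (hu₁.trans h.symm)
          have hadjw : G.Adj w w₁ := by rw [hv₁w] at h2; exact h2
          have hadj : G'.Adj w' ⟨w₁, hw₁v⟩ := hadjw
          rw [hu₁, hv₁w, hf'v, hf'w, hf'ne w₁ hw₁v, segment_symm ℝ q0 c]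
          exact hres _ (hrayP ⟨w₁, hw₁v⟩ hadj)
        · by_cases hw₁ : w₁ = v
          · have hv₁w : v₁ = w := huniq v₁ (by rw [hw₁] at h2; exact h2.symm)
            have hu₁v : u₁ ≠ v := fun h => hne (h.trans hw₁.symm)
            have hadjw : G.Adj w u₁ := by rw [hv₁w] at h1; exact h1.symm
            have hadj : G'.Adj w' ⟨u₁, hu₁v⟩ := hadjw
            rw [hw₁, hv₁w, hf'v, hf'w, hf'ne u₁ hu₁v, Set.inter_comm,
              segment_symm ℝ (f'' ⟨u₁, hu₁v⟩) c]
            exact hres _ (hrayP ⟨u₁, hu₁v⟩ hadj)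
          · rw [hf'ne u₁ hu₁, hf'ne v₁ hv₁, hf'ne w₁ hw₁]
            exact hprop2'' ⟨u₁, hu₁⟩ ⟨v₁, hv₁⟩ ⟨w₁, hw₁⟩ h1 h2
              (fun h => hne (congrArg Subtype.val h))
    -- properness (iii)
    have hprop3' : ∀ u₁ v₁ x₁ : V, G.Adj u₁ v₁ → x₁ ≠ u₁ → x₁ ≠ v₁ →
        f' x₁ ∉ segment ℝ (f' u₁) (f' v₁) := by
      intro u₁ v₁ x₁ h1 hxu hxv
      by_cases hx₁ : x₁ = v
      · have hu₁v : u₁ ≠ v := fun h => hxu (hx₁.trans h.symm)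
        have hv₁v : v₁ ≠ v := fun h => hxv (hx₁.trans h.symm)
        by_cases hu₁w : u₁ = w
        · have hadjw : G.Adj w v₁ := by rw [hu₁w] at h1; exact h1
          have hadj : G'.Adj w' ⟨v₁, hv₁v⟩ := hadjw
          rw [hx₁, hu₁w, hf'v, hf'w, hf'ne v₁ hv₁v]
          exact hnotmem _ (hrayP ⟨v₁, hv₁v⟩ hadj)
        · by_cases hv₁w : v₁ = w
          · have hadjw : G.Adj w u₁ := by rw [hv₁w] at h1; exact h1.symm
            have hadj : G'.Adj w' ⟨u₁, hu₁v⟩ := hadjw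
            rw [hx₁, hv₁w, hf'v, hf'w, hf'ne u₁ hu₁v, segment_symm]
            exact hnotmem _ (hrayP ⟨u₁, hu₁v⟩ hadj)
          · rw [hx₁, hf'v, hf'ne u₁ hu₁v, hf'ne v₁ hv₁v]
            intro hmem
            exact hq0S (hsegmem ⟨u₁, hu₁v⟩ ⟨v₁, hv₁v⟩ h1
              (hsub u₁ hu₁v hu₁w) (hsub v₁ hv₁v hv₁w) hmem)
      · by_cases hu₁v : u₁ = v
        · have hv₁w : v₁ = w := huniq v₁ (by rw [hu₁v] at h1; exact h1)
          have hx₁w : x₁ ≠ w := fun h => hxv (h.trans hv₁w.symm)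
          rw [hu₁v, hv₁w, hf'v, hf'w, hf'ne x₁ hx₁]
          intro hmem
          rw [segment_symm] at hmem
          exact (hsegS _ hmem) (hrange ⟨x₁, hx₁⟩ (hsub x₁ hx₁ hx₁w))
        · by_cases hv₁v : v₁ = v
          · have hu₁w : u₁ = w := huniq u₁ (by rw [hv₁v] at h1; exact h1.symm)
            have hx₁w : x₁ ≠ w := fun h => hxu (h.trans hu₁w.symm)
            rw [hv₁v, hu₁w, hf'v, hf'w, hf'ne x₁ hx₁]
            intro hmem
            exact (hsegS _ hmem) (hrange ⟨x₁, hx₁⟩ (hsub x₁ hx₁ hx₁w))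
          · rw [hf'ne u₁ hu₁v, hf'ne v₁ hv₁v, hf'ne x₁ hx₁]
            exact hprop3'' ⟨u₁, hu₁v⟩ ⟨v₁, hv₁v⟩ ⟨x₁, hx₁⟩ h1
              (fun h => hxu (congrArg Subtype.val h))
              (fun h => hxv (congrArg Subtype.val h))
    -- planarity
    have hnewold : ∀ (aa bb : V), G.Adj aa bb → ∀ (ha : aa ≠ v) (hb : bb ≠ v),
        aa ≠ w → bb ≠ w →
        segment ℝ (f' v) (f' w) ∩ segment ℝ (f' aa) (f' bb) = ∅ := by
      intro aa bb hadj ha hb haw hbw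
      rw [hf'v, hf'w, hf'ne aa ha, hf'ne bb hb]
      apply Set.eq_empty_iff_forall_notMem.mpr
      rintro z ⟨hz1, hz2⟩
      rw [segment_symm] at hz1
      exact (hsegS z hz1) (hsegmem ⟨aa, ha⟩ ⟨bb, hb⟩ hadj (hsub aa ha haw) (hsub bb hb hbw) hz2)
    have hplan' : ∀ u₁ v₁ w₁ x₁ : V, G.Adj u₁ v₁ → G.Adj w₁ x₁ → u₁ ≠ w₁ → u₁ ≠ x₁ →
        v₁ ≠ w₁ → v₁ ≠ x₁ →
        segment ℝ (f' u₁) (f' v₁) ∩ segment ℝ (f' w₁) (f' x₁) = ∅ := by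
      intro u₁ v₁ w₁ x₁ h1 h2 huw hux hvw₁ hvx
      by_cases hu₁ : u₁ = v
      · have hv₁w : v₁ = w := huniq v₁ (by rw [hu₁] at h1; exact h1)
        rw [hu₁, hv₁w]
        exact hnewold w₁ x₁ h2 (fun h => huw (hu₁.trans h.symm))
          (fun h => hux (hu₁.trans h.symm))
          (fun h => hvw₁ (hv₁w.trans h.symm)) (fun h => hvx (hv₁w.trans h.symm))
      · by_cases hv₁ : v₁ = v
        · have hu₁w : u₁ = w := huniq u₁ (by rw [hv₁] at h1; exact h1.symm)
          rw [hu₁w, hv₁, segment_symm ℝ (f' w) (f' v)]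
          exact hnewold w₁ x₁ h2 (fun h => hvw₁ (hv₁.trans h.symm))
            (fun h => hvx (hv₁.trans h.symm))
            (fun h => huw (hu₁w.trans h.symm)) (fun h => hux (hu₁w.trans h.symm))
        · by_cases hw₁ : w₁ = v
          · have hx₁w : x₁ = w := huniq x₁ (by rw [hw₁] at h2; exact h2)
            rw [hw₁, hx₁w, Set.inter_comm]
            exact hnewold u₁ v₁ h1 hu₁ hv₁ (fun h => hux (h.trans hx₁w.symm))
              (fun h => hvx (h.trans hx₁w.symm))
          · by_cases hx₁ : x₁ = v
            · have hw₁w : w₁ = w := huniq w₁ (by rw [hx₁] at h2; exact h2.symm)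
              rw [hx₁, hw₁w, Set.inter_comm, segment_symm ℝ (f' w) (f' v)]
              exact hnewold u₁ v₁ h1 hu₁ hv₁ (fun h => huw (h.trans hw₁w.symm))
                (fun h => hvw₁ (h.trans hw₁w.symm))
            · rw [hf'ne u₁ hu₁, hf'ne v₁ hv₁, hf'ne w₁ hw₁, hf'ne x₁ hx₁]
              exact hplan'' ⟨u₁, hu₁⟩ ⟨v₁, hv₁⟩ ⟨w₁, hw₁⟩ ⟨x₁, hx₁⟩ h1 h2
                (fun h => huw (congrArg Subtype.val h))
                (fun h => hux (congrArg Subtype.val h))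
                (fun h => hvw₁ (congrArg Subtype.val h))
                (fun h => hvx (congrArg Subtype.val h))
    -- alignment equivalence
    have hiff' : ∀ u₁ v₁ w₁ : V, G.Adj u₁ v₁ → G.Adj v₁ w₁ → u₁ ≠ w₁ →
        (f v₁ ∈ openSegment ℝ (f u₁) (f w₁) ↔ f' v₁ ∈ openSegment ℝ (f' u₁) (f' w₁)) := by
      intro u₁ v₁ w₁ h1 h2 hne
      by_cases hv₁ : v₁ = v
      · exfalso
        have hu₁w : u₁ = w := huniq u₁ (by rw [hv₁] at h1; exact h1.symm)
        have hw₁w : w₁ = w := huniq w₁ (by rw [hv₁] at h2; exact h2)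
        exact hne (hu₁w.trans hw₁w.symm)
      · by_cases hu₁ : u₁ = v
        · have hv₁w : v₁ = w := huniq v₁ (by rw [hu₁] at h1; exact h1)
          have hw₁v : w₁ ≠ v := fun h => hne (hu₁.trans h.symm)
          have hadjw : G.Adj w w₁ := by rw [hv₁w] at h2; exact h2
          have hadj : G'.Adj w' ⟨w₁, hw₁v⟩ := hadjw
          rw [hu₁, hv₁w, hf'v, hf'w, hf'ne w₁ hw₁v]
          exact (halignA ⟨w₁, hw₁v⟩ hadj).trans (hgeom (f'' ⟨w₁, hw₁v⟩)).symm
        · by_cases hw₁ : w₁ = v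
          · have hv₁w : v₁ = w := huniq v₁ (by rw [hw₁] at h2; exact h2.symm)
            have hu₁v : u₁ ≠ v := fun h => hne (h.trans hw₁.symm)
            have hadjw : G.Adj w u₁ := by rw [hv₁w] at h1; exact h1.symm
            have hadj : G'.Adj w' ⟨u₁, hu₁v⟩ := hadjw
            rw [hw₁, hv₁w, hf'v, hf'w, hf'ne u₁ hu₁v]
            rw [openSegment_symm ℝ (f u₁) (f v), openSegment_symm ℝ (f'' ⟨u₁, hu₁v⟩) q0]
            exact (halignA ⟨u₁, hu₁v⟩ hadj).trans (hgeom (f'' ⟨u₁, hu₁v⟩)).symm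
          · rw [hf'ne u₁ hu₁, hf'ne v₁ hv₁, hf'ne w₁ hw₁]
            exact hiff'' ⟨u₁, hu₁⟩ ⟨v₁, hv₁⟩ ⟨w₁, hw₁⟩ h1 h2
              (fun h => hne (congrArg Subtype.val h))
    exact ⟨f', ⟨⟨hinj', hprop2', hprop3'⟩, hplan'⟩, hiff'⟩

end Stmt2Main

namespace Stmt2Final

lemma nb_le {V : Type*} {G : SimpleGraph V} (f f' : V → Point)
    (hiff : ∀ u v w : V, G.Adj u v → G.Adj v w → u ≠ w →
      (f v ∈ openSegment ℝ (f u) (f w) ↔ f' v ∈ openSegment ℝ (f' u) (f' w))) :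
    ∀ l : List V, l.Chain' G.Adj → l.Nodup → numBends f' l ≤ numBends f l
  | [], _, _ => le_refl _
  | [_], _, _ => le_refl _
  | [_, _], _, _ => le_refl _
  | a :: b :: c :: rest, hc, hn => by
    have h1 : G.Adj a b := (List.isChain_cons_cons.mp hc).1
    have hc' : (b :: c :: rest).Chain' G.Adj := (List.isChain_cons_cons.mp hc).2
    have h2 : G.Adj b c := (List.isChain_cons_cons.mp hc').1
    have hn' : (b :: c :: rest).Nodup := (List.nodup_cons.mp hn).2
    have hac : a ≠ c := by
      intro h
      exact (List.nodup_cons.mp hn).1 (by rw [h]; simp)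
    have hif := hiff a b c h1 h2 hac
    simp only [numBends]
    apply add_le_add
    · by_cases hb : f b ∈ openSegment ℝ (f a) (f c)
      · simp [hb, hif.mp hb]
      · have hb' : f' b ∉ openSegment ℝ (f' a) (f' c) := fun hh => hb (hif.mpr hh)
        simp [hb, hb']
    · exact nb_le f f' hiff (b :: c :: rest) hc' hn'

end Stmt2Final


/-- If a path-based tree support has a proper straight-line drawing
in which every path has at most `b` bends, then it also has a planar straight-line
drawing in which every path has at most `b` bends. -/

theorem stmt2 {V : Type*} [Fintype V] (G : SimpleGraph V) (P : Finset (List V))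
    (hT : G.IsTree) (hP : IsPathBasedSupport G P) (b : ℕ)
    (h : ∃ f : V → Point, IsProperDrawing G f ∧ ∀ l ∈ P, numBends f l ≤ b) :
    ∃ f : V → Point, IsPlanarDrawing G f ∧ ∀ l ∈ P, numBends f l ≤ b := by
  obtain ⟨f, hf, hb⟩ := h
  obtain ⟨f', hf', hiff⟩ := Stmt2Main.main (Fintype.card V) G f le_rfl hT hf
  refine ⟨f', hf', ?_⟩
  intro l hl
  have hpl := hP.1 l hl
  exact le_trans (Stmt2Final.nb_le f f' hiff l hpl.1 hpl.2) (hb l hl)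
end

section
/- Let m ≥ 3 and consider the cycle graph C_m. In every planar straight-line drawing of C_m there are at least 3 vertices at which the two incident cycle edges are not aligned; that is, every cycle needs at least three bends in any planar straight-line drawing. -/
open Classical

/-- The cycle graph on `ZMod m`. -/
def cycleG (m : ℕ) : SimpleGraph (ZMod m) where
  Adj v w := v ≠ w ∧ (w = v + 1 ∨ v = w + 1)
  symm := by
    constructor
    rintro v w ⟨h1, h2⟩
    exact ⟨h1.symm, h2.symm⟩
  loopless := by
    constructor
    rintro v ⟨h, -⟩
    exact h rfl


open Set in
private lemma cycle_collinear_contra {m : ℕ} (f : ZMod m → Point)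
    (hinj : Function.Injective f)
    (hprop : ∀ u v w : ZMod m, (cycleG m).Adj u v → (cycleG m).Adj v w → u ≠ w →
      segment ℝ (f u) (f v) ∩ segment ℝ (f v) (f w) = {f v})
    (v : ZMod m) (b : Point)
    (hne1 : v - 1 ≠ v) (hne2 : v + 1 ≠ v) (hne3 : v - 1 ≠ v + 1)
    (adj1 : (cycleG m).Adj (v - 1) v) (adj2 : (cycleG m).Adj v (v + 1))
    (hS : ∀ w : ZMod m, f w ∈ segment ℝ (f v) b) : False := by
  have hp := hS (v - 1)
  have hq := hS (v + 1)
  rw [segment_eq_image'] at hp hq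
  obtain ⟨s, hs01, hps⟩ := hp
  obtain ⟨t, ht01, hqt⟩ := hq
  have hs0 : (0 : ℝ) < s := by
    rcases lt_or_eq_of_le hs01.1 with h | h
    · exact h
    · exfalso; apply hne1; apply hinj
      rw [← hps, ← h]; simp
  have ht0 : (0 : ℝ) < t := by
    rcases lt_or_eq_of_le ht01.1 with h | h
    · exact h
    · exfalso; apply hne2; apply hinj
      rw [← hqt, ← h]; simp
  set r : ℝ := min s t with hr
  have hr0 : (0 : ℝ) < r := lt_min hs0 ht0
  set z : Point := f v + r • (b - f v) with hz
  have hz1 : z ∈ segment ℝ (f v) (f (v - 1)) := by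
    rw [segment_eq_image']
    refine ⟨r / s, ⟨div_nonneg hr0.le hs0.le, (div_le_one hs0).2 (min_le_left _ _)⟩, ?_⟩
    rw [← hps]
    show f v + (r / s) • ((fun θ : ℝ => f v + θ • (b - f v)) s - f v) = z
    simp only
    have h1 : f v + s • (b - f v) - f v = s • (b - f v) := by abel
    rw [h1, smul_smul, div_mul_cancel₀ r hs0.ne']
  have hz2 : z ∈ segment ℝ (f v) (f (v + 1)) := by
    rw [segment_eq_image']
    refine ⟨r / t, ⟨div_nonneg hr0.le ht0.le, (div_le_one ht0).2 (min_le_right _ _)⟩, ?_⟩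
    rw [← hqt]
    show f v + (r / t) • ((fun θ : ℝ => f v + θ • (b - f v)) t - f v) = z
    simp only
    have h1 : f v + t • (b - f v) - f v = t • (b - f v) := by abel
    rw [h1, smul_smul, div_mul_cancel₀ r ht0.ne']
  have hint := hprop (v - 1) v (v + 1) adj1 adj2 hne3
  have hzmem : z ∈ segment ℝ (f (v - 1)) (f v) ∩ segment ℝ (f v) (f (v + 1)) := by
    refine ⟨?_, hz2⟩
    rw [segment_symm]
    exact hz1
  rw [hint] at hzmem
  have hzv : z = f v := hzmem
  have hb : b - f v = 0 := by
    have h0 : r • (b - f v) = 0 := by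
      have := hzv
      rw [hz] at this
      linear_combination (norm := module) this
    rcases smul_eq_zero.1 h0 with h | h
    · exact absurd h hr0.ne'
    · exact h
  apply hne1; apply hinj
  rw [← hps, hb]
  simp

/-- In every planar straight-line drawing of the cycle `C_m` (`m ≥ 3`)
there are at least three vertices at which the two incident cycle edges are not aligned. -/
theorem stmt3 (m : ℕ) (hm : 3 ≤ m) (f : ZMod m → Point)
    (hf : IsPlanarDrawing (cycleG m) f) :
    3 ≤ Nat.card {v : ZMod m // f v ∉ openSegment ℝ (f (v - 1)) (f (v + 1))} := by
  classical
  haveI : Fact (1 < m) := ⟨by omega⟩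
  haveI : NeZero m := ⟨by omega⟩
  obtain ⟨⟨hinj, hprop, -⟩, -⟩ := hf
  have hone : (1 : ZMod m) ≠ 0 := one_ne_zero
  have htwo : (2 : ZMod m) ≠ 0 := by
    intro h
    have : ((2 : ℕ) : ZMod m) = 0 := by push_cast; exact h
    rw [ZMod.natCast_eq_zero_iff] at this
    have := Nat.le_of_dvd (by norm_num) this
    omega
  have hne1 : ∀ v : ZMod m, v - 1 ≠ v := fun v h => hone (by linear_combination -h)
  have hne2 : ∀ v : ZMod m, v + 1 ≠ v := fun v h => hone (by linear_combination h)
  have hne3 : ∀ v : ZMod m, v - 1 ≠ v + 1 := fun v h => htwo (by linear_combination -h)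
  have adj1 : ∀ v : ZMod m, (cycleG m).Adj (v - 1) v := fun v =>
    ⟨hne1 v, Or.inl (by ring)⟩
  have adj2 : ∀ v : ZMod m, (cycleG m).Adj v (v + 1) := fun v =>
    ⟨fun h => hne2 v h.symm, Or.inl rfl⟩
  set S : Set Point := Set.range f with hSdef
  have hSfin : S.Finite := Set.finite_range f
  set K : Set Point := convexHull ℝ S with hKdef
  have hKcomp : IsCompact K := hSfin.isCompact_convexHull ℝ
  have hKconv : Convex ℝ K := convex_convexHull ℝ S
  set E : Set Point := K.extremePoints ℝ with hEdef
  have hES : E ⊆ S := extremePoints_convexHull_subset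
  have hEfin : E.Finite := hSfin.subset hES
  -- every extreme point is (the image of) a bend
  set Bset : Set (ZMod m) := {v : ZMod m | f v ∉ openSegment ℝ (f (v - 1)) (f (v + 1))}
    with hBdef
  have hEB : E ⊆ f '' Bset := by
    intro a haE
    obtain ⟨v, rfl⟩ := hES haE
    refine ⟨v, ?_, rfl⟩
    intro hmem
    rw [mem_extremePoints] at haE
    have h1 : f (v - 1) ∈ K := subset_convexHull ℝ S ⟨v - 1, rfl⟩
    have h2 : f (v + 1) ∈ K := subset_convexHull ℝ S ⟨v + 1, rfl⟩
    have := (haE.2 _ h1 _ h2 hmem).1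
    exact hne1 v (hinj this)
  -- Krein–Milman: K is the convex hull of its extreme points
  have hKM : convexHull ℝ E = K := by
    have hclos : IsClosed (convexHull ℝ E) := (hEfin.isCompact_convexHull ℝ).isClosed
    rw [← hclos.closure_eq]
    exact closure_convexHull_extremePoints hKcomp hKconv
  by_contra hcon
  push_neg at hcon
  have hB2 : Bset.ncard ≤ 2 := by
    have hcard : Nat.card {v : ZMod m // f v ∉ openSegment ℝ (f (v - 1)) (f (v + 1))}
        = Bset.ncard := Nat.card_coe_set_eq Bset
    omega
  have hE2 : E.ncard ≤ 2 := by
    calc E.ncard ≤ (f '' Bset).ncard := Set.ncard_le_ncard hEB (Set.toFinite _)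
      _ ≤ Bset.ncard := Set.ncard_image_le (Set.toFinite _)
      _ ≤ 2 := hB2
  have hEne : E.Nonempty := hKcomp.extremePoints_nonempty
    ⟨f 0, subset_convexHull ℝ S ⟨0, rfl⟩⟩
  obtain ⟨a, haE⟩ := hEne
  -- E is contained in a pair {a, b}
  obtain ⟨bb, hab : E ⊆ {a, bb}⟩ : ∃ bb, E ⊆ {a, bb} := by
    by_cases hEa : E ⊆ {a}
    · exact ⟨a, hEa.trans (by simp)⟩
    · obtain ⟨b, hbE, hba⟩ := Set.not_subset.1 hEa
      refine ⟨b, fun c hcE => ?_⟩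
      by_contra hc
      simp only [Set.mem_insert_iff, Set.mem_singleton_iff, not_or] at hc hba
      have h3 : ({a, b, c} : Set Point).ncard = 3 :=
        Set.ncard_eq_three.2 ⟨a, b, c, fun h => hba h.symm, fun h => hc.1 h.symm,
          fun h => hc.2 h.symm, rfl⟩
      have hsub : ({a, b, c} : Set Point) ⊆ E := by
        intro x hx
        rcases hx with rfl | rfl | rfl
        exacts [haE, hbE, hcE]
      have := Set.ncard_le_ncard hsub hEfin
      omega
  have hSseg : ∀ w : ZMod m, f w ∈ segment ℝ a bb := by
    intro w
    have hw : f w ∈ K := subset_convexHull ℝ S ⟨w, rfl⟩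
    rw [← hKM] at hw
    have : convexHull ℝ E ⊆ convexHull ℝ {a, bb} := convexHull_mono hab
    rw [convexHull_pair] at this
    exact this hw
  obtain ⟨v, rfl⟩ := hES haE
  exact cycle_collinear_contra f hinj hprop v bb (hne1 v) (hne2 v) (hne3 v)
    (adj1 v) (adj2 v) hSseg
end

section
/- Let h ≥ 1 and let T be the perfect binary tree of height h, i.e., the rooted tree in which every vertex at depth less than h has exactly two children and all leaves have depth h. For every alignment A of T there exists a leaf ℓ such that the root-to-ℓ path bends with respect to A at each of its h−1 internal vertices; in particular, for every alignment of T, some root-to-leaf path has at least h−1 bends. -/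
open Classical

/-- Vertices of the perfect binary tree of height `h`: binary strings of length at
most `h`; the root is the empty string, the depth of a vertex is its length, and the
two children of a vertex `l` of depth `< h` are `true :: l` and `false :: l`. -/
def PBT (h : ℕ) : Type := {l : List Bool // l.length ≤ h}

/-- The perfect binary tree of height `h`: every vertex at depth less than `h` has
exactly two children, and all leaves have depth `h`. -/
def pbtGraph (h : ℕ) : SimpleGraph (PBT h) where
  Adj v w := (v.val = w.val.tail ∧ w.val ≠ []) ∨ (w.val = v.val.tail ∧ v.val ≠ [])
  symm := by
    constructor
    rintro v w (h | h)
    · exact Or.inr h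
    · exact Or.inl h
  loopless := by
    constructor
    rintro ⟨l, hl⟩ (⟨h1, h2⟩ | ⟨h1, h2⟩) <;>
    · simp only [ne_eq] at h1 h2
      have hlen := congrArg List.length h1
      rw [List.length_tail] at hlen
      have : 0 < l.length := List.length_pos_iff.mpr h2
      omega

noncomputable def pick (h : ℕ) (A : Sym2 (PBT h) → Sym2 (PBT h) → Prop)
    (l : List Bool) : Bool :=
  if hl : l.length + 1 ≤ h ∧ l ≠ [] then
    if A (s((⟨l.tail, by rw [List.length_tail]; omega⟩ : PBT h), ⟨l, by omega⟩))
         (s((⟨l, by omega⟩ : PBT h), ⟨true :: l, by simp; omega⟩)) then false else true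
  else true

theorem pick_spec (h : ℕ) (A : Sym2 (PBT h) → Sym2 (PBT h) → Prop)
    (hA : IsAlignment (pbtGraph h) A) (l : List Bool)
    (h1 : l.length + 1 ≤ h) (h2 : l ≠ []) :
    ¬ A (s((⟨l.tail, by rw [List.length_tail]; omega⟩ : PBT h), ⟨l, by omega⟩))
        (s((⟨l, by omega⟩ : PBT h), ⟨pick h A l :: l, by simp; omega⟩)) := by
  unfold pick
  rw [dif_pos ⟨h1, h2⟩]
  split
  case isTrue ht =>
    intro hf
    have := hA.uniq ⟨l, by omega⟩ _ _ _
      (Sym2.mem_mk_right _ _) (Sym2.mem_mk_left _ _) (Sym2.mem_mk_left _ _) ht hf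
    replace this := Sym2.eq_iff.mp this
    rcases this with ⟨_, heq⟩ | ⟨heq, _⟩
    · exact absurd (congrArg Subtype.val heq) (by simp)
    · have := congrArg (fun x : PBT h => x.val.length) heq
      simp at this
  case isFalse ht => exact ht

noncomputable def build (h : ℕ) (A : Sym2 (PBT h) → Sym2 (PBT h) → Prop) : ℕ → List Bool
  | 0 => []
  | n + 1 => pick h A (build h A n) :: build h A n

theorem build_length (h : ℕ) (A : Sym2 (PBT h) → Sym2 (PBT h) → Prop) (n : ℕ) :
    (build h A n).length = n := by
  induction n with
  | zero => rfl
  | succ n ih => simp [build, ih]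

theorem build_drop (h : ℕ) (A : Sym2 (PBT h) → Sym2 (PBT h) → Prop) (n j : ℕ) (hj : j ≤ n) :
    (build h A n).drop j = build h A (n - j) := by
  induction n generalizing j with
  | zero => interval_cases j; rfl
  | succ n ih =>
    match j with
    | 0 => rfl
    | j + 1 => simpa [build] using ih j (by omega)

/-- For every alignment `A` of the perfect binary tree of height
`h ≥ 1` there is a leaf `ℓ` such that the root-to-`ℓ` path bends, with respect to `A`,
at each of its `h - 1` internal vertices. -/
theorem stmt4 (h : ℕ) (hh : 1 ≤ h) (A : Sym2 (PBT h) → Sym2 (PBT h) → Prop)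
    (hA : IsAlignment (pbtGraph h) A) :
    ∃ (ℓ : List Bool) (hℓ : ℓ.length = h),
      ∀ k : ℕ, 1 ≤ k → k ≤ h - 1 →
        ¬ A s((⟨ℓ.drop (k + 1), by rw [List.length_drop]; omega⟩ : PBT h),
              (⟨ℓ.drop k, by rw [List.length_drop]; omega⟩ : PBT h))
            s((⟨ℓ.drop k, by rw [List.length_drop]; omega⟩ : PBT h),
              (⟨ℓ.drop (k - 1), by rw [List.length_drop]; omega⟩ : PBT h)) := by

  refine ⟨build h A h, build_length h A h, fun k hk1 hk2 => ?_⟩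
  have hi1 : 1 ≤ h - k := by omega
  have hi2 : h - k ≤ h - 1 := by omega
  have hlen := build_length h A (h - k)
  have hspec := pick_spec h A hA (build h A (h - k)) (by omega)
    (by intro hnil; rw [hnil] at hlen; simp at hlen; omega)
  have e1 : (build h A h).drop (k + 1) = (build h A (h - k)).tail := by
    rw [build_drop h A h (k+1) (by omega)]
    have : h - k = (h - (k + 1)) + 1 := by omega
    rw [this]; rfl
  have e2 : (build h A h).drop k = build h A (h - k) :=
    build_drop h A h k (by omega)
  have e3 : (build h A h).drop (k - 1) = pick h A (build h A (h - k)) :: build h A (h - k) := by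
    rw [build_drop h A h (k-1) (by omega)]
    have : h - (k - 1) = (h - k) + 1 := by omega
    rw [this]; rfl
  convert hspec using 4 <;> exact Sym2.eq_iff.mpr (Or.inl ⟨Subtype.ext (by assumption), Subtype.ext (by assumption)⟩)
end

section
/- Let T be a finite tree with at least one vertex and let S be a vertex cover of T (every edge of T has at least one endpoint in S) with |S| = k such that every vertex of T of degree at most 1 belongs to S. Then T has at most 2k − 1 vertices. -/
/-!
The complement of a vertex cover is an independent set, so the edges at its vertices are pairwise
distinct, and each of its vertices has degree at least 2 since all leaves lie in `S`. Hence
`2 (n - k) ≤ #edges = n - 1`.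
-/

open Classical

open Finset

namespace SimpleGraph

variable {V : Type*} [Fintype V] [DecidableEq V] {G : SimpleGraph V} [DecidableRel G.Adj]

theorem IsIndepSet.sum_degree_le_card_edgeFinset {s : Finset V} (hs : G.IsIndepSet (s : Set V)) :
    ∑ v ∈ s, G.degree v ≤ #G.edgeFinset := by
  have hdisj : (s : Set V).PairwiseDisjoint (G.incidenceFinset ·) := by
    intro u hu v hv huv
    simp only [Function.onFun]
    refine Finset.disjoint_left.mpr fun e heu hev => ?_
    rw [mem_incidenceFinset] at heu hev
    exact hs hu hv huv (G.adj_of_mem_incidenceSet huv heu hev)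
  calc ∑ v ∈ s, G.degree v = #(s.biUnion (G.incidenceFinset ·)) := by
        rw [card_biUnion hdisj]
        exact sum_congr rfl fun v _ => (G.card_incidenceFinset_eq_degree v).symm
    _ ≤ #G.edgeFinset := by
        refine card_le_card fun e he => ?_
        obtain ⟨v, -, hev⟩ := mem_biUnion.mp he
        exact mem_edgeFinset.mpr ((mem_incidenceFinset _ _ _).mp hev).1

theorem IsIndepSet.two_mul_card_le_card_edgeFinset {s : Finset V}
    (hs : G.IsIndepSet (s : Set V)) (hdeg : ∀ v ∈ s, 2 ≤ G.degree v) :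
    2 * #s ≤ #G.edgeFinset :=
  calc 2 * #s = ∑ _v ∈ s, 2 := by rw [sum_const, smul_eq_mul, mul_comm]
    _ ≤ ∑ v ∈ s, G.degree v := sum_le_sum hdeg
    _ ≤ #G.edgeFinset := hs.sum_degree_le_card_edgeFinset

end SimpleGraph

/-- If `S` is a vertex cover of size `k` of a finite tree `T`
containing all vertices of degree at most 1, then `T` has at most `2k - 1` vertices. -/
theorem stmt6 {V : Type*} [Fintype V] (G : SimpleGraph V) [DecidableRel G.Adj]
    (hT : G.IsTree) (S : Finset V) (k : ℕ) (hk : S.card = k)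
    (hcover : ∀ u v : V, G.Adj u v → u ∈ S ∨ v ∈ S)
    (hsmall : ∀ v : V, G.degree v ≤ 1 → v ∈ S) :
    Fintype.card V ≤ 2 * k - 1 := by
  have hindep : G.IsIndepSet ((Sᶜ : Finset V) : Set V) := by
    rw [coe_compl, SimpleGraph.isIndepSet_compl_iff_isVertexCover]
    exact fun u v huv => hcover u v huv
  have hdeg : ∀ v ∈ Sᶜ, 2 ≤ G.degree v := fun v hv => by
    by_contra! h
    exact mem_compl.mp hv (hsmall v (by omega))
  have hedges := hindep.two_mul_card_le_card_edgeFinset hdeg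
  have hcard : #G.edgeFinset + 1 = Fintype.card V := hT.card_edgeFinset
  have hSc : #Sᶜ = Fintype.card V - #S := card_compl S
  have hS : #S ≤ Fintype.card V := card_le_univ S
  omega
end

section
/- Let T be a finite tree with at least two vertices that has no vertex of degree 2, and let p_1, …, p_k be simple paths in T such that every edge of T lies on at least one of the paths. Then T has at most 4k − 2 vertices. -/
open Classical

/-!
A leaf of `T` can only be an end of a simple path through it, so the `2k` ends of the covering
paths include every leaf. On the other hand, in a tree on `n` vertices with `ℓ` leaves and no
vertex of degree 2, the handshake lemma gives `ℓ + 3 (n - ℓ) ≤ 2 (n - 1)`, i.e. `n + 2 ≤ 2ℓ ≤ 4k`.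
-/

open Finset

namespace SimpleGraph

variable {V : Type*} {G : SimpleGraph V}

lemma degree_ne_one_of_isChain_cons_cons_cons {a v c : V} [Fintype (G.neighborSet v)]
    {rest : List V} (hchain : (a :: v :: c :: rest).IsChain G.Adj)
    (hnodup : (a :: v :: c :: rest).Nodup) : G.degree v ≠ 1 := by
  intro hv
  obtain ⟨w, -, huniq⟩ := G.degree_eq_one_iff_existsUnique_adj.mp hv
  have hva : G.Adj v a := (List.isChain_cons_cons.mp hchain).1.symm
  have hvc : G.Adj v c := (List.isChain_cons_cons.mp (List.isChain_cons_cons.mp hchain).2).1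
  have hac : a ≠ c := fun h => by simp [h] at hnodup
  exact hac ((huniq a hva).trans (huniq c hvc).symm)

lemma head?_eq_or_getLast?_eq_of_degree_eq_one {v : V} [Fintype (G.neighborSet v)]
    (hv : G.degree v = 1) :
    ∀ {l : List V}, l.IsChain G.Adj → l.Nodup → (∃ e ∈ edgesOfList l, v ∈ e) →
      l.head? = some v ∨ l.getLast? = some v
  | [], _, _, ⟨e, he, _⟩ | [_], _, _, ⟨e, he, _⟩ => by simp [edgesOfList] at he
  | a :: b :: rest, hchain, hnodup, ⟨e, he, hve⟩ => by
    have second_is_last : v = b → (a :: b :: rest).getLast? = some v := by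
      rintro rfl
      cases rest with
      | nil => rfl
      | cons c t => exact absurd hv (degree_ne_one_of_isChain_cons_cons_cons hchain hnodup)
    rw [edgesOfList, List.mem_cons] at he
    rcases he with rfl | he
    · rcases Sym2.mem_iff.mp hve with rfl | rfl
      · exact Or.inl rfl
      · exact Or.inr (second_is_last rfl)
    · rcases head?_eq_or_getLast?_eq_of_degree_eq_one hv (List.isChain_cons_cons.mp hchain).2
          (List.nodup_cons.mp hnodup).2 ⟨e, he, hve⟩ with hhead | hlast
      · exact Or.inr (second_is_last (Option.some_inj.mp hhead.symm))
      · exact Or.inr (by rwa [List.getLast?_cons_cons])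

lemma card_degree_eq_one_le_two_mul_of_covering_paths [Fintype V] [DecidableRel G.Adj] {k : ℕ}
    {p : Fin k → List V} (hp : ∀ i, IsPathList G (p i))
    (hcover : ∀ e ∈ G.edgeSet, ∃ i, e ∈ edgesOfList (p i)) :
    #{v | G.degree v = 1} ≤ 2 * k := by
  let ends : Fin k → Finset V := fun i => (p i).head?.toFinset ∪ (p i).getLast?.toFinset
  have leaves_subset : ({v | G.degree v = 1} : Finset V) ⊆ univ.biUnion ends := by
    intro v hv
    have hv : G.degree v = 1 := (mem_filter.mp hv).2
    obtain ⟨u, hvu⟩ := (G.degree_pos_iff_exists_adj v).mp (by omega)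
    obtain ⟨i, hi⟩ := hcover s(v, u) hvu
    simp only [mem_biUnion, mem_univ, true_and, ends, mem_union,
      Option.mem_toFinset, Option.mem_def]
    exact ⟨i, head?_eq_or_getLast?_eq_of_degree_eq_one hv (hp i).1 (hp i).2
      ⟨s(v, u), hi, Sym2.mem_mk_left v u⟩⟩
  have card_toFinset_le (o : Option V) : #o.toFinset ≤ 1 := by cases o <;> simp
  have card_ends : ∀ i, #(ends i) ≤ 2 := fun i =>
    (card_union_le _ _).trans (add_le_add (card_toFinset_le _) (card_toFinset_le _))
  calc #{v | G.degree v = 1} ≤ #(univ.biUnion ends) := card_le_card leaves_subset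
    _ ≤ ∑ i, #(ends i) := card_biUnion_le
    _ ≤ ∑ _i : Fin k, 2 := sum_le_sum fun i _ => card_ends i
    _ = 2 * k := by simp [mul_comm]

lemma IsTree.card_add_two_le_two_mul_card_degree_eq_one [Fintype V] [Nontrivial V]
    [DecidableRel G.Adj] (hT : G.IsTree) (hdeg : ∀ v, G.degree v ≠ 2) :
    Fintype.card V + 2 ≤ 2 * #{v | G.degree v = 1} := by
  have pointwise : ∀ v, 3 ≤ G.degree v + 2 * (if G.degree v = 1 then 1 else 0) := by
    intro v
    have := hT.preconnected.degree_pos_of_nontrivial v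
    have := hdeg v
    split_ifs <;> omega
  have summed := sum_le_sum fun v (_ : v ∈ univ) => pointwise v
  rw [sum_add_distrib, ← mul_sum, sum_boole, G.sum_degrees_eq_twice_card_edges,
    sum_const, card_univ, smul_eq_mul] at summed
  have := hT.card_edgeFinset
  push_cast at summed
  omega

end SimpleGraph

/-- If a finite tree `T` with at least two vertices has no vertex of
degree 2 and its edges are covered by `k` simple paths, then `T` has at most `4k - 2`
vertices. -/
theorem stmt9 {V : Type*} [Fintype V] (G : SimpleGraph V) [DecidableRel G.Adj]
    (hT : G.IsTree) (h2 : 2 ≤ Fintype.card V)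
    (hdeg : ∀ v : V, G.degree v ≠ 2)
    (k : ℕ) (p : Fin k → List V) (hp : ∀ i, IsPathList G (p i))
    (hcover : ∀ e ∈ G.edgeSet, ∃ i, e ∈ edgesOfList (p i)) :
    Fintype.card V ≤ 4 * k - 2 := by
  have : Nontrivial V := Fintype.one_lt_card_iff_nontrivial.mp h2
  have hvertices := hT.card_add_two_le_two_mul_card_degree_eq_one hdeg
  have hleaves := SimpleGraph.card_degree_eq_one_le_two_mul_of_covering_paths hp hcover
  omega
end

section
/- Let (T, 𝒫) be a path-based caterpillar support, i.e., a path-based tree support whose tree T is a caterpillar. Then there exists an alignment A of T such that every path of 𝒫 has at most 2 bends with respect to A; hence the curve complexity of every path-based caterpillar support is at most 2. -/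
open Classical

/-- A caterpillar: a finite tree in which the non-leaf vertices form a
(possibly empty) path, the *spine*. -/
def IsCaterpillar {V : Type*} [Fintype V] (G : SimpleGraph V) [DecidableRel G.Adj] : Prop :=
  G.IsTree ∧ ∃ l : List V, l.Nodup ∧ l.Chain' G.Adj ∧ ∀ v : V, v ∈ l ↔ G.degree v ≠ 1

section Aux

variable {V : Type*}

/-- The alignment pairing consecutive spine edges. -/
def spineRel (l : List V) : Sym2 V → Sym2 V → Prop := fun e f =>
  ∃ i, ∃ h : i + 2 < l.length,
    (e = s(l[i]'(by omega), l[i+1]'(by omega)) ∧ f = s(l[i+1]'(by omega), l[i+2]'(by omega))) ∨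
    (f = s(l[i]'(by omega), l[i+1]'(by omega)) ∧ e = s(l[i+1]'(by omega), l[i+2]'(by omega)))

lemma chain'_adj {G : SimpleGraph V} {l : List V} (h : l.Chain' G.Adj) {i : ℕ}
    (hi : i + 1 < l.length) : G.Adj (l[i]'(by omega)) (l[i+1]'(by omega)) := by
  simpa using List.isChain_iff_getElem.mp h i (by omega)

lemma spineWalk (G : SimpleGraph V) {l : List V} (hch : l.Chain' G.Adj)
    (i j : ℕ) (hij : i ≤ j) : ∀ (hj : j < l.length),
    ∃ p : G.Walk (l[i]'(by omega)) (l[j]'(by omega)),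
      p.support = (l.take (j+1)).drop i ∧ p.length = j - i := by
  induction j, hij using Nat.le_induction with
  | base =>
    intro hj
    refine ⟨SimpleGraph.Walk.nil, ?_, by simp⟩
    apply List.ext_getElem
    · simp; omega
    · intro n h1 h2
      have hn : n = 0 := by simp at h2; omega
      subst hn
      simp
  | succ j hij ih =>
    intro hj
    obtain ⟨p, hs, hl⟩ := ih (by omega)
    refine ⟨p.concat (chain'_adj hch (by omega)), ?_, by simp [hl]; omega⟩
    rw [SimpleGraph.Walk.support_concat, hs]
    conv_rhs => rw [show j + 1 + 1 = (j + 1) + 1 from rfl, List.take_succ,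
      List.getElem?_eq_getElem hj]
    rw [List.drop_append_of_le_length (by simp; omega)]
    simp

lemma spine_adj_succ (G : SimpleGraph V) (hT : G.IsTree) {l : List V} (hnd : l.Nodup)
    (hch : l.Chain' G.Adj) {i j : ℕ} (hi : i < l.length) (hj : j < l.length)
    (hij : i < j) (hadj : G.Adj (l[i]'hi) (l[j]'hj)) : j = i + 1 := by
  by_contra hne
  obtain ⟨p, hs, hl⟩ := spineWalk G hch i j (le_of_lt hij) hj
  have hp : p.IsPath := by
    rw [SimpleGraph.Walk.isPath_def, hs]
    exact hnd.sublist ((List.drop_sublist _ _).trans (List.take_sublist _ _))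
  have hq : (SimpleGraph.Walk.cons hadj SimpleGraph.Walk.nil).IsPath := by
    simp [SimpleGraph.Walk.isPath_def, hadj.ne]
  have heq := ((hT.existsUnique_path _ _).unique hp hq)
  have : p.length = 1 := by rw [heq]; simp
  omega

lemma spine_adj_consec (G : SimpleGraph V) (hT : G.IsTree) {l : List V} (hnd : l.Nodup)
    (hch : l.Chain' G.Adj) {i j : ℕ} (hi : i < l.length) (hj : j < l.length)
    (hadj : G.Adj (l[i]'hi) (l[j]'hj)) : j = i + 1 ∨ i = j + 1 := by
  rcases lt_trichotomy i j with h | h | h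
  · exact Or.inl (spine_adj_succ G hT hnd hch hi hj h hadj)
  · exact absurd (by subst h; rfl) hadj.ne
  · exact Or.inr (spine_adj_succ G hT hnd hch hj hi h hadj.symm)

lemma two_le_degree {G : SimpleGraph V} [Fintype V] [DecidableRel G.Adj]
    {a b v : V} (h1 : G.Adj v a) (h2 : G.Adj v b) (hab : a ≠ b) : G.degree v ≠ 1 := by
  intro h
  have ha : a ∈ G.neighborFinset v := by simp [h1]
  have hb : b ∈ G.neighborFinset v := by simp [h2]
  exact hab (Finset.card_le_one.mp (le_of_eq h) a ha b hb)

end Aux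

section Aux2
variable {V : Type*}

lemma sym2_spine_eq {l : List V} (hnd : l.Nodup) {i j : ℕ}
    (hi : i + 1 < l.length) (hj : j + 1 < l.length)
    (h : s(l[i]'(by omega), l[i+1]'(by omega)) = s(l[j]'(by omega), l[j+1]'(by omega))) :
    i = j := by
  rw [Sym2.eq_iff] at h
  rcases h with ⟨h1, _⟩ | ⟨h1, h2⟩
  · exact hnd.getElem_inj_iff.mp h1
  · have e1 := hnd.getElem_inj_iff.mp h1
    have e2 := hnd.getElem_inj_iff.mp h2
    omega

lemma spineRel_isAlignment (G : SimpleGraph V) {l : List V} (hnd : l.Nodup)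
    (hch : l.Chain' G.Adj) : IsAlignment G (spineRel l) := by
  constructor
  · rintro e e' ⟨i, h, h1 | h1⟩
    · exact ⟨i, h, Or.inr h1⟩
    · exact ⟨i, h, Or.inl h1⟩
  · rintro e e' ⟨i, h, ⟨rfl, rfl⟩ | ⟨rfl, rfl⟩⟩ <;>
      exact ⟨chain'_adj hch (by omega), chain'_adj hch (by omega)⟩
  · rintro e e' ⟨i, h, ⟨rfl, rfl⟩ | ⟨rfl, rfl⟩⟩ <;>
    · intro heq
      have := sym2_spine_eq hnd (by omega) (by omega) heq
      omega
  · rintro e e' ⟨i, h, ⟨rfl, rfl⟩ | ⟨rfl, rfl⟩⟩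
    · exact ⟨l[i+1]'(by omega), by simp, by simp⟩
    · exact ⟨l[i+1]'(by omega), by simp, by simp⟩
  · rintro v e e₁ e₂ hv hv1 hv2 ⟨i, h, hA⟩ ⟨j, h', hB⟩
    rcases hA with ⟨rfl, rfl⟩ | ⟨rfl, rfl⟩ <;> rcases hB with ⟨he, rfl⟩ | ⟨rfl, he⟩
    · -- e = s(l i, l i+1) = s(l j, l j+1)
      have hij : i = j := sym2_spine_eq hnd (by omega) (by omega) he
      subst hij; rfl
    · -- e = s(l i, l i+1) = s(l j+1, l j+2)
      exfalso
      have hij : i = j + 1 := by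
        rw [Sym2.eq_iff] at he
        rcases he with ⟨h1, h2⟩ | ⟨h1, h2⟩
        · have := hnd.getElem_inj_iff.mp h1; omega
        · have e1 := hnd.getElem_inj_iff.mp h1
          have e2 := hnd.getElem_inj_iff.mp h2
          omega
      subst hij
      -- v ∈ e : v = l (j+1) or l (j+2); v ∈ e₁ : v = l (j+2) or l (j+3);
      -- v ∈ e₂ : v = l j or l (j+1)
      simp only [Sym2.mem_iff] at hv hv1 hv2
      rcases hv with rfl | rfl <;> rcases hv1 with h1 | h1 <;> rcases hv2 with h2 | h2 <;>
        first
          | (have := hnd.getElem_inj_iff.mp h1; omega)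
          | (have := hnd.getElem_inj_iff.mp h2; omega)
    · -- symmetric mixed case
      exfalso
      have hij : j = i + 1 := by
        rw [Sym2.eq_iff] at he
        rcases he with ⟨h1, h2⟩ | ⟨h1, h2⟩
        · have := hnd.getElem_inj_iff.mp h1; omega
        · have e1 := hnd.getElem_inj_iff.mp h1
          have e2 := hnd.getElem_inj_iff.mp h2
          omega
      subst hij
      simp only [Sym2.mem_iff] at hv hv1 hv2
      rcases hv with rfl | rfl <;> rcases hv1 with h1 | h1 <;> rcases hv2 with h2 | h2 <;>
        first
          | (have := hnd.getElem_inj_iff.mp h1; omega)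
          | (have := hnd.getElem_inj_iff.mp h2; omega)
    · -- e = s(l i+1, l i+2) = s(l j+1, l j+2)
      have hij : i = j := by
        have := sym2_spine_eq hnd (i := i+1) (j := j+1) (by omega) (by omega) he
        omega
      subst hij; rfl
end Aux2


section Aux3
variable {V : Type*}

/-- Any "middle" triple of a simple path in a caterpillar is aligned by the spine relation. -/
lemma middle_aligned (G : SimpleGraph V) [Fintype V] [DecidableRel G.Adj]
    (hT : G.IsTree) {l : List V} (hnd : l.Nodup) (hch : l.Chain' G.Adj)
    (hdeg : ∀ v : V, v ∈ l ↔ G.degree v ≠ 1)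
    {p : List V} (hpc : p.Chain' G.Adj) (hpn : p.Nodup)
    {k : ℕ} (hk : k + 4 < p.length) :
    spineRel l s(p[k+1]'(by omega), p[k+2]'(by omega)) s(p[k+2]'(by omega), p[k+3]'(by omega)) := by
  have a0 : G.Adj (p[k]'(by omega)) (p[k+1]'(by omega)) := chain'_adj hpc (by omega)
  have a1 : G.Adj (p[k+1]'(by omega)) (p[k+2]'(by omega)) := chain'_adj hpc (by omega)
  have a2 : G.Adj (p[k+2]'(by omega)) (p[k+3]'(by omega)) := chain'_adj hpc (by omega)
  have a3 : G.Adj (p[k+3]'(by omega)) (p[k+4]'(by omega)) := chain'_adj hpc (by omega)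
  have hu : p[k+1]'(by omega) ∈ l := (hdeg _).mpr
    (two_le_degree a0.symm a1 (by intro h; have := hpn.getElem_inj_iff.mp h; omega))
  have hv : p[k+2]'(by omega) ∈ l := (hdeg _).mpr
    (two_le_degree a1.symm a2 (by intro h; have := hpn.getElem_inj_iff.mp h; omega))
  have hw : p[k+3]'(by omega) ∈ l := (hdeg _).mpr
    (two_le_degree a2.symm a3 (by intro h; have := hpn.getElem_inj_iff.mp h; omega))
  obtain ⟨i, hi, hiu⟩ := List.mem_iff_getElem.mp hu
  obtain ⟨j, hj, hjv⟩ := List.mem_iff_getElem.mp hv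
  obtain ⟨m, hm, hmw⟩ := List.mem_iff_getElem.mp hw
  have him : i ≠ m := by
    intro h
    have : p[k+1]'(by omega) = p[k+3]'(by omega) := by rw [← hiu, ← hmw]; congr 1
    have := hpn.getElem_inj_iff.mp this
    omega
  have c1 : j = i + 1 ∨ i = j + 1 :=
    spine_adj_consec G hT hnd hch hi hj (by rw [hiu, hjv]; exact a1)
  have c2 : m = j + 1 ∨ j = m + 1 :=
    spine_adj_consec G hT hnd hch hj hm (by rw [hjv, hmw]; exact a2)
  rcases c1 with rfl | h1
  · rcases c2 with rfl | h2
    · -- j = i+1, m = i+2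
      refine ⟨i, by omega, Or.inl ⟨?_, ?_⟩⟩
      · rw [show l[i]'(by omega) = l[i]'hi from rfl, hiu, hjv]
      · rw [hjv, hmw]
    · omega
  · rcases c2 with rfl | h2
    · omega
    · -- i = j+1, j = m+1, so i = m+2
      refine ⟨m, by omega, Or.inr ⟨?_, ?_⟩⟩
      · rw [show l[m]'(by omega) = l[m]'hm from rfl, hmw,
          show l[m+1]'(by omega) = l[j]'hj from (by congr 1; omega), hjv]
        exact Sym2.eq_swap
      · rw [show l[m+1]'(by omega) = l[j]'hj from (by congr 1; omega), hjv,
          show l[m+2]'(by omega) = l[i]'hi from (by congr 1; omega), hiu]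
        exact Sym2.eq_swap

lemma numBendsA_le_one (A : Sym2 V → Sym2 V → Prop) :
    ∀ m : List V,
      (∀ k, (hk : k + 3 < m.length) →
        A s(m[k]'(by omega), m[k+1]'(by omega)) s(m[k+1]'(by omega), m[k+2]'(by omega))) →
      numBendsA A m ≤ 1
  | [], _ => by simp [numBendsA]
  | [a], _ => by simp [numBendsA]
  | [a, b], _ => by simp [numBendsA]
  | [a, b, c], _ => by rw [numBendsA]; split <;> simp [numBendsA]
  | a :: b :: c :: d :: r, h => by
    have h0 := h 0 (by simp)
    simp only [List.getElem_cons_zero, List.getElem_cons_succ] at h0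
    rw [numBendsA, if_pos h0]
    simpa using numBendsA_le_one A (b :: c :: d :: r) (fun k hk => by
      have := h (k+1) (by simp at hk ⊢; omega)
      simpa using this)

lemma numBendsA_cons_le (A : Sym2 V → Sym2 V → Prop) (a : V) (t : List V) :
    numBendsA A (a :: t) ≤ 1 + numBendsA A t := by
  match t with
  | [] => simp [numBendsA]
  | [b] => simp [numBendsA]
  | b :: c :: r => rw [numBendsA]; split <;> omega

end Aux3

/-- Every path-based caterpillar support admits an alignment with
respect to which every path has at most 2 bends. -/
theorem stmt11 {V : Type*} [Fintype V] (G : SimpleGraph V) [DecidableRel G.Adj]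
    (P : Finset (List V)) (hG : IsCaterpillar G) (hP : IsPathBasedSupport G P) :
    ∃ A : Sym2 V → Sym2 V → Prop, IsAlignment G A ∧ ∀ l ∈ P, numBendsA A l ≤ 2 := by
  obtain ⟨hT, l, hnd, hch, hdeg⟩ := hG
  refine ⟨spineRel l, spineRel_isAlignment G hnd hch, ?_⟩
  intro p hpP
  obtain ⟨hpc, hpn⟩ := hP.1 p hpP
  match p, hpc, hpn with
  | [], _, _ => simp [numBendsA]
  | a :: t, hpc, hpn =>
    have ht : numBendsA (spineRel l) t ≤ 1 := by
      refine numBendsA_le_one _ t (fun k hk => ?_)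
      have := middle_aligned G hT hnd hch hdeg hpc hpn
        (k := k) (by simp; omega)
      simpa using this
    have := numBendsA_cons_le (spineRel l) a t
    omega
end
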